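/- arXiv:2209.14543 — 7 statements merged into one kernel-verified Lean document; each statement's English description precedes it below -/
import Mathlib

section
/- Let ℓ ≥ 1 and let S = {i₁ < ⋯ < i_m} ⊆ {1,…,ℓ} be nonempty, with the convention i₀ = 0. Then for every 1 ≤ j ≤ m, the number of integers n with 1 ≤ n ≤ i_j such that |S ∩ {n, n+1, …, i_j}| is even equals S₂(j) = Σ_{k=1}^{⌊j/2⌋} (i_{j−2k+1} − i_{j−2k}). -/
/-!
Write `S = {i 1 < ⋯ < i m}`. For `s < j` and `i s < n ≤ i (s + 1)`, the elements of `S` in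
`[n, i j]` are exactly `i (s + 1), …, i j`, so there are `j - s` of them. Hence
`(0, i j]` splits into the blocks `(i s, i (s + 1)]`, `s < j`, on each of which the parity is
constant, and the blocks of even parity are those with `s = j - 2k`, `1 ≤ k ≤ j / 2`.
-/

open Finset

theorem sum_Ioc_eq_sum_range_sum_Ioc {M : Type*} [AddCommMonoid M] (f : ℕ → M) {i : ℕ → ℕ}
    {j : ℕ} (hi : MonotoneOn i (Set.Iic j)) :
    ∑ n ∈ Ioc (i 0) (i j), f n = ∑ s ∈ range j, ∑ n ∈ Ioc (i s) (i (s + 1)), f n := by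
  induction j with
  | zero => simp
  | succ j ih =>
    rw [sum_range_succ, ← ih (hi.mono (Set.Iic_subset_Iic.2 j.le_succ)),
      sum_Ioc_consecutive f
        (hi (Set.mem_Iic.2 (Nat.zero_le _)) (Set.mem_Iic.2 j.le_succ) j.zero_le)
        (hi (Set.mem_Iic.2 j.le_succ) (Set.mem_Iic.2 le_rfl) j.le_succ)]

theorem card_image_inter_Icc_of_mem_Ioc {i : ℕ → ℕ} {m j s n : ℕ}
    (hi : StrictMonoOn i (Set.Iic m)) (hjm : j ≤ m) (hsj : s < j)
    (hn : n ∈ Ioc (i s) (i (s + 1))) :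
    #((Icc 1 m).image i ∩ Icc n (i j)) = j - s := by
  have mem {k : ℕ} (hk : k ≤ m) : k ∈ Set.Iic m := hk
  rw [mem_Ioc] at hn
  have hblock : (Icc 1 m).image i ∩ Icc n (i j) = (Icc (s + 1) j).image i := by
    ext x
    simp only [mem_inter, mem_image, mem_Icc]
    constructor
    · rintro ⟨⟨k, ⟨-, hkm⟩, rfl⟩, hnk, hkj⟩
      have hsk : i s < i k := hn.1.trans_le hnk
      refine ⟨k, ⟨?_, (hi.le_iff_le (mem hkm) (mem hjm)).1 hkj⟩, rfl⟩
      exact (hi.lt_iff_lt (mem (by omega)) (mem hkm)).1 hsk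
    · rintro ⟨k, ⟨hsk, hkj⟩, rfl⟩
      refine ⟨⟨k, ⟨by omega, by omega⟩, rfl⟩, ?_, (hi.le_iff_le (mem (by omega)) (mem hjm)).2 hkj⟩
      exact hn.2.trans ((hi.le_iff_le (mem (by omega)) (mem (by omega))).2 hsk)
  rw [hblock, card_image_of_injOn (hi.injOn.mono fun k hk => mem (by simp only [coe_Icc, Set.mem_Icc] at hk; omega)),
    Nat.card_Icc]
  omega

theorem sum_range_filter_even_sub {M : Type*} [AddCommMonoid M] (g : ℕ → M) (j : ℕ) :
    ∑ s ∈ (range j).filter (fun s => Even (j - s)), g s = ∑ k ∈ Icc 1 (j / 2), g (j - 2 * k) := by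
  refine sum_nbij' (fun s => (j - s) / 2) (fun k => j - 2 * k) ?_ ?_ ?_ ?_ ?_ <;>
    intro s hs <;> simp only [mem_filter, mem_range, mem_Icc, Nat.even_iff] at hs ⊢
  all_goals first | omega | (congr 1; omega)

theorem stmt1_general (m : ℕ)
    (i : ℕ → ℕ) (h0 : i 0 = 0)
    (hmono : ∀ k ≤ m, i k < i (k + 1))
    (j : ℕ) (hjm : j ≤ m) :
    (((Finset.Icc 1 (i j)).filter
        (fun n => Even ((((Finset.Icc 1 m).image i) ∩ Finset.Icc n (i j)).card))).card : ℤ)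
      = ∑ k ∈ Finset.Icc 1 (j / 2),
          ((i (j - 2 * k + 1) : ℤ) - (i (j - 2 * k) : ℤ)) := by
  have hi : StrictMonoOn i (Set.Iic m) := strictMonoOn_Iic_of_lt_succ fun k hk => hmono k hk.le
  have hij : MonotoneOn i (Set.Iic j) := hi.monotoneOn.mono (Set.Iic_subset_Iic.2 hjm)
  have hIcc : Icc 1 (i j) = Ioc (i 0) (i j) := by ext; simp only [mem_Icc, mem_Ioc, h0]; omega
  have hcount : #((Icc 1 (i j)).filter fun n => Even #((Icc 1 m).image i ∩ Icc n (i j))) =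
      ∑ s ∈ (range j).filter (fun s => Even (j - s)), (i (s + 1) - i s) := by
    rw [card_filter, hIcc, sum_Ioc_eq_sum_range_sum_Ioc _ hij, sum_filter]
    refine sum_congr rfl fun s hs => ?_
    rw [sum_congr rfl fun n hn => by
      rw [card_image_inter_Icc_of_mem_Ioc hi hjm (mem_range.1 hs) hn], sum_const, Nat.card_Ioc,
      smul_eq_mul]
    split_ifs <;> simp
  rw [hcount, sum_range_filter_even_sub, Nat.cast_sum]
  refine sum_congr rfl fun k hk => Nat.cast_sub (hij ?_ ?_ (Nat.le_succ _)) <;>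
    simp only [mem_Icc] at hk <;> exact Set.mem_Iic.2 (by omega)

/-- counting compact roots `γ_n + ⋯ + γ_{i_j}` in type `A_ℓ`. -/
theorem stmt1 (ℓ m : ℕ) (hℓ : 1 ≤ ℓ) (hm : 1 ≤ m)
    (i : ℕ → ℕ) (h0 : i 0 = 0) (htop : i (m + 1) = ℓ + 1)
    (hmono : ∀ k ≤ m, i k < i (k + 1))
    (j : ℕ) (hj : 1 ≤ j) (hjm : j ≤ m) :
    (((Finset.Icc 1 (i j)).filter
        (fun n => Even ((((Finset.Icc 1 m).image i) ∩ Finset.Icc n (i j)).card))).card : ℤ)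
      = ∑ k ∈ Finset.Icc 1 (j / 2),
          ((i (j - 2 * k + 1) : ℤ) - (i (j - 2 * k) : ℤ)) :=
  stmt1_general m i h0 hmono j hjm
end

section
/- Let ℓ ≥ 1 and let S = {i₁ < ⋯ < i_m} ⊆ {1,…,ℓ} be nonempty, with the convention i_{m+1} = ℓ+1. Then for every 1 ≤ j ≤ m, the number of integers n with i_j + 1 ≤ n ≤ ℓ such that |S ∩ {i_j+1, …, n}| is even and nonzero equals T₂(j) = Σ_{k=1}^{⌈(m−j−1)/2⌉} (i_{j+2k+1} − i_{j+2k}). -/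
/-!
On the stretch `i t ≤ n < i (t + 1)` between two consecutive elements of `S`, the set
`S ∩ [i j + 1, n]` is `{i (j + 1), …, i t}`, of size `t - j`. So `n` is counted exactly when it
lies in such a stretch with `t = j + 2k`, `k ≥ 1`; these stretches are disjoint and the one for
`t = j + 2k` has `i (j + 2k + 1) - i (j + 2k)` elements.
-/

open Finset

theorem exists_le_lt_succ_of_le_of_lt {β : Type*} [LinearOrder β] (f : ℕ → β) {a b : ℕ} {x : β}
    (hab : a ≤ b) (ha : f a ≤ x) (hb : x < f b) :
    ∃ t, a ≤ t ∧ t < b ∧ f t ≤ x ∧ x < f (t + 1) := by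
  induction b with
  | zero =>
    obtain rfl : a = 0 := by omega
    exact absurd ha hb.not_ge
  | succ b ih =>
    have hab' : a ≠ b + 1 := by
      rintro rfl
      exact absurd ha hb.not_ge
    by_cases hbx : f b ≤ x
    · exact ⟨b, by omega, b.lt_succ_self, hbx, hb⟩
    · obtain ⟨t, hat, htb, htx, hxt⟩ := ih (by omega) (not_le.mp hbx)
      exact ⟨t, hat, htb.trans b.lt_succ_self, htx, hxt⟩

section

variable {i : ℕ → ℕ} {m : ℕ}

theorem image_Icc_inter_Icc_eq_image_Ioc (hi : StrictMonoOn i (Set.Iic (m + 1)))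
    {j t n : ℕ} (hjt : j ≤ t) (htm : t ≤ m) (hn : i t ≤ n) (hn' : n < i (t + 1)) :
    (Icc 1 m).image i ∩ Icc (i j + 1) n = (Ioc j t).image i := by
  have hmem : ∀ {k}, k ≤ m + 1 → k ∈ Set.Iic (m + 1) := id
  ext x
  simp only [mem_inter, mem_image, mem_Icc, mem_Ioc]
  constructor
  · rintro ⟨⟨k, ⟨hk1, hkm⟩, rfl⟩, hjk, hkn⟩
    refine ⟨k, ⟨?_, ?_⟩, rfl⟩
    · exact (hi.lt_iff_lt (hmem (by omega)) (hmem (by omega))).mp (by omega)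
    · by_contra! hkt
      have := hi.monotoneOn (hmem (by omega)) (hmem (by omega)) (show t + 1 ≤ k by omega)
      omega
  · rintro ⟨k, ⟨hjk, hkt⟩, rfl⟩
    have hik : i j < i k := hi (hmem (by omega)) (hmem (by omega)) hjk
    have hkn : i k ≤ i t := hi.monotoneOn (hmem (by omega)) (hmem (by omega)) hkt
    exact ⟨⟨k, ⟨by omega, by omega⟩, rfl⟩, by omega, by omega⟩

theorem card_image_Icc_inter_Icc (hi : StrictMonoOn i (Set.Iic (m + 1)))
    {j t n : ℕ} (hjt : j ≤ t) (htm : t ≤ m) (hn : i t ≤ n) (hn' : n < i (t + 1)) :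
    ((Icc 1 m).image i ∩ Icc (i j + 1) n).card = t - j := by
  rw [image_Icc_inter_Icc_eq_image_Ioc hi hjt htm hn hn', card_image_of_injOn, Nat.card_Ioc]
  exact hi.injOn.mono fun k hk => Set.mem_Iic.mpr (by simp only [coe_Ioc, Set.mem_Ioc] at hk; omega)

theorem mem_Icc_and_even_card_ne_zero_iff (hi : StrictMonoOn i (Set.Iic (m + 1))) {ℓ j n : ℕ}
    (htop : i (m + 1) = ℓ + 1) (hjm : j ≤ m) :
    (n ∈ Icc (i j + 1) ℓ ∧ Even ((Icc 1 m).image i ∩ Icc (i j + 1) n).card ∧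
        ((Icc 1 m).image i ∩ Icc (i j + 1) n).card ≠ 0) ↔
      ∃ k ∈ Icc 1 ((m - j) / 2), n ∈ Ico (i (j + 2 * k)) (i (j + 2 * k + 1)) := by
  have hmem : ∀ {k}, k ≤ m + 1 → k ∈ Set.Iic (m + 1) := id
  simp only [mem_Icc, mem_Ico]
  constructor
  · rintro ⟨⟨hjn, hnℓ⟩, heven, hne⟩
    obtain ⟨t, hjt, htm, htn, hnt⟩ :=
      exists_le_lt_succ_of_le_of_lt i (show j ≤ m + 1 by omega) (show i j ≤ n by omega)
        (show n < i (m + 1) by omega)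
    rw [card_image_Icc_inter_Icc hi hjt (by omega) htn hnt] at heven hne
    obtain ⟨k, hk⟩ := heven
    obtain rfl : t = j + 2 * k := by omega
    exact ⟨k, ⟨by omega, by omega⟩, htn, hnt⟩
  · rintro ⟨k, ⟨hk1, hkm⟩, htn, hnt⟩
    have hjk : i j < i (j + 2 * k) := hi (hmem (by omega)) (hmem (by omega)) (by omega)
    have hkℓ : i (j + 2 * k + 1) ≤ i (m + 1) :=
      hi.monotoneOn (hmem (by omega)) (hmem le_rfl) (by omega)
    rw [card_image_Icc_inter_Icc hi (by omega) (by omega) htn hnt]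
    exact ⟨⟨by omega, by omega⟩, ⟨k, by omega⟩, by omega⟩

theorem pairwiseDisjoint_Ico_even_steps (hi : MonotoneOn i (Set.Iic (m + 1))) (j : ℕ) :
    ((Icc 1 ((m - j) / 2) : Finset ℕ) : Set ℕ).PairwiseDisjoint
      fun k => Ico (i (j + 2 * k)) (i (j + 2 * k + 1)) := by
  have hmem : ∀ {k}, k ≤ m + 1 → k ∈ Set.Iic (m + 1) := id
  have key : ∀ a b, a < b → b ≤ (m - j) / 2 →
      Disjoint (Ico (i (j + 2 * a)) (i (j + 2 * a + 1))) (Ico (i (j + 2 * b)) (i (j + 2 * b + 1))) :=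
    fun a b hab hbm => disjoint_left.mpr fun x hxa hxb => by
      have := hi (hmem (by omega)) (hmem (by omega)) (show j + 2 * a + 1 ≤ j + 2 * b by omega)
      simp only [mem_Ico] at hxa hxb
      omega
  intro a ha b hb hab
  simp only [coe_Icc, Set.mem_Icc] at ha hb
  rcases hab.lt_or_gt with h | h
  · exact key a b h hb.2
  · exact (key b a h ha.2).symm

end

theorem stmt3_general (ℓ m : ℕ)
    (i : ℕ → ℕ) (htop : i (m + 1) = ℓ + 1)
    (hmono : ∀ k ≤ m, i k < i (k + 1))
    (j : ℕ) (hjm : j ≤ m) :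
    (((Finset.Icc (i j + 1) ℓ).filter
        (fun n => Even ((((Finset.Icc 1 m).image i) ∩ Finset.Icc (i j + 1) n).card) ∧
          (((Finset.Icc 1 m).image i) ∩ Finset.Icc (i j + 1) n).card ≠ 0)).card : ℤ)
      = ∑ k ∈ Finset.Icc 1 ((m - j) / 2),
          ((i (j + 2 * k + 1) : ℤ) - (i (j + 2 * k) : ℤ)) := by
  have hi : StrictMonoOn i (Set.Iic (m + 1)) :=
    strictMonoOn_Iic_of_lt_succ fun k hk => hmono k (by omega)
  have hfilter : (Icc (i j + 1) ℓ).filter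
      (fun n => Even ((Icc 1 m).image i ∩ Icc (i j + 1) n).card ∧
        ((Icc 1 m).image i ∩ Icc (i j + 1) n).card ≠ 0) =
      (Icc 1 ((m - j) / 2)).biUnion fun k => Ico (i (j + 2 * k)) (i (j + 2 * k + 1)) := by
    ext n
    rw [mem_filter, mem_biUnion, mem_Icc_and_even_card_ne_zero_iff hi htop hjm]
  rw [hfilter, card_biUnion (pairwiseDisjoint_Ico_even_steps hi.monotoneOn j), Nat.cast_sum]
  refine sum_congr rfl fun k hk => ?_
  have hle : i (j + 2 * k) ≤ i (j + 2 * k + 1) := (hmono _ (by rw [mem_Icc] at hk; omega)).le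
  rw [Nat.card_Ico, Nat.cast_sub hle]

/-- counting relevant compact roots `γ_{i_j+1} + ⋯ + γ_n` in type `A_ℓ`. -/
theorem stmt3 (ℓ m : ℕ) (hℓ : 1 ≤ ℓ) (hm : 1 ≤ m)
    (i : ℕ → ℕ) (h0 : i 0 = 0) (htop : i (m + 1) = ℓ + 1)
    (hmono : ∀ k ≤ m, i k < i (k + 1))
    (j : ℕ) (hj : 1 ≤ j) (hjm : j ≤ m) :
    (((Finset.Icc (i j + 1) ℓ).filter
        (fun n => Even ((((Finset.Icc 1 m).image i) ∩ Finset.Icc (i j + 1) n).card) ∧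
          (((Finset.Icc 1 m).image i) ∩ Finset.Icc (i j + 1) n).card ≠ 0)).card : ℤ)
      = ∑ k ∈ Finset.Icc 1 ((m - j) / 2),
          ((i (j + 2 * k + 1) : ℤ) - (i (j + 2 * k) : ℤ)) :=
  stmt3_general ℓ m i htop hmono j hjm
end

section
/- Let ℓ ≥ 1 and let S = {i₁ < ⋯ < i_m} ⊆ {1,…,ℓ} be nonempty, with conventions i₀ = 0 and i_{m+1} = ℓ+1. Call an interval [a,b] ⊆ {1,…,ℓ} compact if |S ∩ [a,b]| is even, and relevant if in addition S ∩ [a,b] ≠ ∅. For 1 ≤ i ≤ ℓ let δᶜ_i denote the number of relevant compact intervals containing i, and set δᶜ_0 = δᶜ_{ℓ+1} = 0. Then for every 1 ≤ j ≤ m: −δᶜ_{i_j−1} + 2δᶜ_{i_j} − δᶜ_{i_j+1} = S₁(j) + S₂(j) − T₁(j) − T₂(j). -/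
/-
Let `rank x` be the number of points of `S` that are `≤ x`. Moving from `n` to `n + 1` loses
the relevant intervals ending at `n` and gains those starting at `n + 1`, so the second
difference of `δᶜ` at `n` is
`(#starting at n − #ending at n − 1) + (#ending at n − #starting at n + 1)`.
An interval `[a + 1, b]` is relevant exactly when `rank b − rank a` is even and positive, and
`rank` equals `s` on the block `[i_s, i_{s+1})`. Hence each of the four counts is the total
length `∑ (i_{s+1} − i_s)` of the blocks whose index `s` has the right parity relative to `j`;
these are `S₁(j)`, `T₁(j)`, `S₂(j)` and `T₂(j)`.
-/

/-- Number of relevant compact intervals `[a,b] ⊆ {1,…,ℓ}` (even, nonempty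
intersection with `S`) containing `n`. -/
def deltaA (ℓ : ℕ) (S : Finset ℕ) (n : ℕ) : ℤ :=
  (((Finset.Icc 1 ℓ ×ˢ Finset.Icc 1 ℓ).filter
      (fun p => p.1 ≤ p.2 ∧ p.1 ≤ n ∧ n ≤ p.2 ∧
        Even ((S ∩ Finset.Icc p.1 p.2).card) ∧
        (S ∩ Finset.Icc p.1 p.2).Nonempty)).card : ℤ)

open Finset

namespace CompactInterval

def IsRelevant (S : Finset ℕ) (a b : ℕ) : Prop :=
  Even #(S ∩ Icc a b) ∧ (S ∩ Icc a b).Nonempty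

instance (S : Finset ℕ) : DecidableRel (IsRelevant S) := fun _ _ =>
  inferInstanceAs (Decidable (_ ∧ _))

def endingAt (S : Finset ℕ) (c : ℕ) : ℕ := #{a ∈ Icc 1 c | IsRelevant S a c}

def startingAt (ℓ : ℕ) (S : Finset ℕ) (c : ℕ) : ℕ := #{b ∈ Icc c ℓ | IsRelevant S c b}

def crossing (ℓ : ℕ) (S : Finset ℕ) (c : ℕ) : ℕ :=
  #{p ∈ Icc 1 ℓ ×ˢ Icc 1 ℓ | p.1 ≤ c ∧ c < p.2 ∧ IsRelevant S p.1 p.2}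

variable {ℓ : ℕ} {S : Finset ℕ} {c : ℕ}

lemma deltaA_eq (n : ℕ) :
    deltaA ℓ S n =
      #{p ∈ Icc 1 ℓ ×ˢ Icc 1 ℓ |
        p.1 ≤ p.2 ∧ p.1 ≤ n ∧ n ≤ p.2 ∧ IsRelevant S p.1 p.2} :=
  rfl

lemma deltaA_eq_endingAt_add_crossing (hc : c ≤ ℓ) :
    deltaA ℓ S c = endingAt S c + crossing ℓ S c := by
  rw [deltaA_eq, ← card_filter_add_card_filter_not (fun p : ℕ × ℕ => p.2 = c),
    filter_filter, filter_filter]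
  push_cast
  congr 2
  · refine card_nbij' Prod.fst (fun a => (a, c)) ?_ ?_ ?_ fun _ _ => rfl
    all_goals
      intro p hp
      simp only [coe_filter, mem_product, mem_Icc, Set.mem_ofPred_eq] at hp ⊢
      grind
  · rw [crossing]
    refine congrArg card (filter_congr fun p hp => ?_)
    simp only [mem_product, mem_Icc] at hp
    grind

lemma deltaA_succ_eq_startingAt_add_crossing :
    deltaA ℓ S (c + 1) = startingAt ℓ S (c + 1) + crossing ℓ S c := by
  rw [deltaA_eq, ← card_filter_add_card_filter_not (fun p : ℕ × ℕ => p.1 = c + 1),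
    filter_filter, filter_filter]
  push_cast
  congr 2
  · refine card_nbij' Prod.snd (fun b => (c + 1, b)) ?_ ?_ ?_ fun _ _ => rfl
    all_goals
      intro p hp
      simp only [coe_filter, mem_product, mem_Icc, Set.mem_ofPred_eq] at hp ⊢
      grind
  · rw [crossing]
    refine congrArg card (filter_congr fun p hp => ?_)
    simp only [mem_product, mem_Icc] at hp
    grind

lemma deltaA_sub_deltaA_succ (hc : c ≤ ℓ) :
    deltaA ℓ S c - deltaA ℓ S (c + 1) = (endingAt S c : ℤ) - startingAt ℓ S (c + 1) := by
  rw [deltaA_eq_endingAt_add_crossing hc, deltaA_succ_eq_startingAt_add_crossing]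
  ring

lemma deltaA_second_difference {n : ℕ} (hn : 1 ≤ n) (hnℓ : n ≤ ℓ) :
    -deltaA ℓ S (n - 1) + 2 * deltaA ℓ S n - deltaA ℓ S (n + 1) =
      (startingAt ℓ S n : ℤ) - endingAt S (n - 1) + endingAt S n
        - startingAt ℓ S (n + 1) := by
  have hdown := deltaA_sub_deltaA_succ (S := S) (show n - 1 ≤ ℓ by omega)
  rw [Nat.sub_add_cancel hn] at hdown
  linarith [deltaA_sub_deltaA_succ (S := S) hnℓ]

def rank (S : Finset ℕ) (x : ℕ) : ℕ := #{y ∈ S | y ≤ x}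

lemma rank_mono : Monotone (rank S) := fun _ _ h =>
  card_le_card (monotone_filter_right S fun _ _ hy => hy.trans h)

lemma card_inter_Icc_succ (a b : ℕ) : #(S ∩ Icc (a + 1) b) = rank S b - rank S a := by
  rcases le_total a b with h | h
  · have : S ∩ Icc (a + 1) b = {y ∈ S | y ≤ b} \ {y ∈ S | y ≤ a} := by
      ext y
      simp only [mem_inter, mem_Icc, mem_sdiff, mem_filter]
      grind
    rw [this, card_sdiff_of_subset (monotone_filter_right S fun _ _ hy => hy.trans h), rank,
      rank]
  · rw [Icc_eq_empty (by omega), inter_empty, card_empty, Nat.sub_eq_zero_of_le (rank_mono h)]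

lemma isRelevant_succ_iff {a b : ℕ} :
    IsRelevant S (a + 1) b ↔ Even (rank S b - rank S a) ∧ rank S a < rank S b := by
  rw [IsRelevant, ← card_pos, card_inter_Icc_succ, Nat.sub_pos_iff_lt]

-- `a` encodes the interval `[a + 1, c]`, which is empty for `a ≥ c`; hence any `n ≥ c` works.
lemma endingAt_eq {n : ℕ} (hn : c ≤ n) : endingAt S c =
    #{a ∈ range n | Even (rank S c - rank S a) ∧ rank S a < rank S c} := by
  refine card_nbij' (· - 1) (· + 1) ?_ ?_ ?_ ?_
  all_goals
    intro a ha
    simp only [coe_filter, mem_Icc, mem_range, Set.mem_ofPred_eq] at ha ⊢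
  · obtain ⟨⟨ha1, hac⟩, hrel⟩ := ha
    obtain ⟨a, rfl⟩ := Nat.exists_eq_add_of_le' ha1
    exact ⟨by omega, isRelevant_succ_iff.mp hrel⟩
  · have := rank_mono.reflect_lt ha.2.2
    exact ⟨⟨by omega, by omega⟩, isRelevant_succ_iff.mpr ha.2⟩
  · omega
  · omega

lemma startingAt_eq {y : ℕ} (hc : 1 ≤ c) (hy : y ≤ c) : startingAt ℓ S c =
    #{b ∈ Ico y (ℓ + 1) | Even (rank S b - rank S (c - 1)) ∧ rank S (c - 1) < rank S b} := by
  obtain ⟨c, rfl⟩ := Nat.exists_eq_add_of_le' hc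
  rw [startingAt, Nat.add_sub_cancel]
  congr 1
  ext b
  simp only [mem_filter, mem_Icc, mem_Ico, isRelevant_succ_iff]
  constructor
  · rintro ⟨hb, hrel⟩
    exact ⟨by omega, hrel⟩
  · rintro ⟨hb, hrel⟩
    have := rank_mono.reflect_lt hrel.2
    exact ⟨by omega, hrel⟩

lemma card_filter_Ico_eq_sum_blocks {i f : ℕ → ℕ} {P : ℕ → Prop} [DecidablePred P]
    {t u : ℕ} (htu : t ≤ u) (hi : MonotoneOn i (Set.Iic u))
    (hf : ∀ s < u, ∀ x ∈ Ico (i s) (i (s + 1)), f x = s) :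
    (#{x ∈ Ico (i t) (i u) | P (f x)} : ℤ) =
      ∑ s ∈ Ico t u with P s, ((i (s + 1) : ℤ) - i s) := by
  induction u, htu using Nat.le_induction with
  | base => simp
  | succ u htu ih =>
    have hiu : i u ≤ i (u + 1) := hi (Set.mem_Iic.mpr (by omega)) Set.self_mem_Iic (by omega)
    have hblock : {x ∈ Ico (i u) (i (u + 1)) | P (f x)} =
        if P u then Ico (i u) (i (u + 1)) else ∅ := by
      rw [filter_congr fun x hx => by rw [hf u (by omega) x hx]]
      split_ifs with hP <;> simp [hP]
    have hitu : i t ≤ i u := hi (Set.mem_Iic.mpr (by omega)) (Set.mem_Iic.mpr (by omega)) htu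
    rw [← Ico_union_Ico_eq_Ico hitu hiu, filter_union,
      card_union_of_disjoint (disjoint_filter_filter (Ico_disjoint_Ico_consecutive _ _ _)),
      sum_filter, sum_Ico_succ_top htu, ← sum_filter, hblock, Nat.cast_add,
      ih (hi.mono (Set.Iic_subset_Iic.mpr (Nat.le_succ u))) fun s hs => hf s (by omega)]
    split_ifs <;> simp [Nat.cast_sub hiu]

section Sequence

variable {m : ℕ} {i : ℕ → ℕ}

lemma apply_lt_apply (hi : StrictMonoOn i (Set.Iic (m + 1))) {k l : ℕ} (hkl : k < l)
    (hl : l ≤ m + 1) : i k < i l :=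
  hi (Set.mem_Iic.mpr (by omega)) (Set.mem_Iic.mpr hl) hkl

lemma apply_pos (hi : StrictMonoOn i (Set.Iic (m + 1))) {j : ℕ} (hj : 1 ≤ j) (hjm : j ≤ m) :
    0 < i j :=
  (Nat.zero_le _).trans_lt (apply_lt_apply hi hj (by omega))

lemma rank_image_eq (hi : StrictMonoOn i (Set.Iic (m + 1))) {s x : ℕ}
    (hs : s ≤ m) (hx : x ∈ Ico (i s) (i (s + 1))) : rank ((Icc 1 m).image i) x = s := by
  rw [mem_Ico] at hx
  have hle {k l : ℕ} (hk : k ≤ m + 1) (hl : l ≤ m + 1) : i k ≤ i l ↔ k ≤ l :=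
    hi.le_iff_le (Set.mem_Iic.mpr hk) (Set.mem_Iic.mpr hl)
  have hfilter : {k ∈ Icc 1 m | i k ≤ x} = Icc 1 s := by
    ext k
    simp only [mem_filter, mem_Icc]
    constructor
    · rintro ⟨⟨hk1, hkm⟩, hkx⟩
      refine ⟨hk1, not_lt.mp fun hsk => ?_⟩
      have := (hle (k := s + 1) (l := k) (by omega) (by omega)).mpr hsk
      omega
    · rintro ⟨hk1, hks⟩
      exact ⟨⟨hk1, by omega⟩, ((hle (by omega) (by omega)).mpr hks).trans hx.1⟩
  rw [rank, filter_image, card_image_of_injOn, hfilter, Nat.card_Icc, Nat.add_sub_cancel]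
  exact hi.injOn.mono fun k hk => Set.mem_Iic.mpr (by simp at hk; omega)

lemma rank_image_apply (hi : StrictMonoOn i (Set.Iic (m + 1))) {j : ℕ} (hjm : j ≤ m) :
    rank ((Icc 1 m).image i) (i j) = j :=
  rank_image_eq hi hjm
    (left_mem_Ico.mpr (apply_lt_apply hi (Nat.lt_succ_self j) (by omega)))

lemma rank_image_apply_sub_one (hi : StrictMonoOn i (Set.Iic (m + 1))) {j : ℕ} (hj : 1 ≤ j)
    (hjm : j ≤ m) : rank ((Icc 1 m).image i) (i j - 1) = j - 1 := by
  have hlt : i (j - 1) < i j := apply_lt_apply hi (by omega) (by omega)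
  refine rank_image_eq hi (by omega) (mem_Ico.mpr ⟨by omega, ?_⟩)
  rw [Nat.sub_add_cancel hj]
  omega

lemma card_filter_rank_Ico_eq_sum (hi : StrictMonoOn i (Set.Iic (m + 1))) (P : ℕ → Prop)
    [DecidablePred P] {t u : ℕ} (htu : t ≤ u) (hu : u ≤ m + 1) :
    (#{x ∈ Ico (i t) (i u) | P (rank ((Icc 1 m).image i) x)} : ℤ) =
      ∑ s ∈ Ico t u with P s, ((i (s + 1) : ℤ) - i s) :=
  card_filter_Ico_eq_sum_blocks htu (hi.monotoneOn.mono (Set.Iic_subset_Iic.mpr hu))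
    fun _ hs _ hx => rank_image_eq hi (by omega) hx

lemma startingAt_at_eq (htop : i (m + 1) = ℓ + 1) (hi : StrictMonoOn i (Set.Iic (m + 1)))
    {j : ℕ} (hj : 1 ≤ j) (hjm : j ≤ m) :
    (startingAt ℓ ((Icc 1 m).image i) (i j) : ℤ) =
      ∑ k ∈ Icc 1 ((m - j + 1) / 2), ((i (j + 2 * k) : ℤ) - i (j + 2 * k - 1)) := by
  rw [startingAt_eq (apply_pos hi hj hjm) le_rfl, rank_image_apply_sub_one hi hj hjm, ← htop,
    card_filter_rank_Ico_eq_sum hi (fun r => Even (r - (j - 1)) ∧ j - 1 < r) (by omega) le_rfl]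
  refine (sum_nbij' (fun k => j + 2 * k - 1) (fun s => (s + 1 - j) / 2) ?_ ?_ ?_ ?_ ?_).symm
  all_goals intro k hk; simp only [mem_filter, mem_Ico, mem_Icc, Nat.even_iff] at hk ⊢
  · omega
  · omega
  · omega
  · omega
  · rw [show j + 2 * k - 1 + 1 = j + 2 * k by omega]

lemma endingAt_at_eq (h0 : i 0 = 0) (hi : StrictMonoOn i (Set.Iic (m + 1)))
    {j : ℕ} (hjm : j ≤ m) :
    (endingAt ((Icc 1 m).image i) (i j) : ℤ) =
      ∑ k ∈ Icc 1 (j / 2), ((i (j - 2 * k + 1) : ℤ) - i (j - 2 * k)) := by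
  rw [endingAt_eq le_rfl, rank_image_apply hi hjm, range_eq_Ico, ← h0,
    card_filter_rank_Ico_eq_sum hi (fun r => Even (j - r) ∧ r < j) (Nat.zero_le j) (by omega)]
  refine (sum_nbij' (fun k => j - 2 * k) (fun s => (j - s) / 2) ?_ ?_ ?_ ?_ ?_).symm
  all_goals intro k hk; simp only [mem_filter, mem_Ico, mem_Icc, Nat.even_iff] at hk ⊢
  all_goals omega

lemma endingAt_before_eq (h0 : i 0 = 0) (hi : StrictMonoOn i (Set.Iic (m + 1)))
    {j : ℕ} (hj : 1 ≤ j) (hjm : j ≤ m) :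
    (endingAt ((Icc 1 m).image i) (i j - 1) : ℤ) =
      ∑ k ∈ Icc 1 ((j + 1) / 2 - 1), ((i (j - 2 * k) : ℤ) - i (j - 2 * k - 1)) := by
  rw [endingAt_eq (Nat.sub_le (i j) 1), rank_image_apply_sub_one hi hj hjm, range_eq_Ico, ← h0,
    card_filter_rank_Ico_eq_sum hi (fun r => Even (j - 1 - r) ∧ r < j - 1) (Nat.zero_le j)
      (by omega)]
  refine (sum_nbij' (fun k => j - 2 * k - 1) (fun s => (j - 1 - s) / 2) ?_ ?_ ?_ ?_ ?_).symm
  all_goals intro k hk; simp only [mem_filter, mem_Ico, mem_Icc, Nat.even_iff] at hk ⊢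
  · omega
  · omega
  · omega
  · omega
  · rw [show j - 2 * k - 1 + 1 = j - 2 * k by omega]

lemma startingAt_after_eq (htop : i (m + 1) = ℓ + 1) (hi : StrictMonoOn i (Set.Iic (m + 1)))
    {j : ℕ} (hjm : j ≤ m) :
    (startingAt ℓ ((Icc 1 m).image i) (i j + 1) : ℤ) =
      ∑ k ∈ Icc 1 ((m - j) / 2), ((i (j + 2 * k + 1) : ℤ) - i (j + 2 * k)) := by
  rw [startingAt_eq (Nat.le_add_left 1 _) (Nat.le_succ _), Nat.add_sub_cancel,
    rank_image_apply hi hjm, ← htop,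
    card_filter_rank_Ico_eq_sum hi (fun r => Even (r - j) ∧ j < r) (by omega) le_rfl]
  refine (sum_nbij' (fun k => j + 2 * k) (fun s => (s - j) / 2) ?_ ?_ ?_ ?_ ?_).symm
  all_goals intro k hk; simp only [mem_filter, mem_Ico, mem_Icc, Nat.even_iff] at hk ⊢
  all_goals omega

end Sequence

end CompactInterval

open CompactInterval

theorem stmt7_general (ℓ m : ℕ)
    (i : ℕ → ℕ) (h0 : i 0 = 0) (htop : i (m + 1) = ℓ + 1)
    (hmono : ∀ k ≤ m, i k < i (k + 1))
    (j : ℕ) (hj : 1 ≤ j) (hjm : j ≤ m) :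
    -(deltaA ℓ ((Finset.Icc 1 m).image i) (i j - 1))
      + 2 * deltaA ℓ ((Finset.Icc 1 m).image i) (i j)
      - deltaA ℓ ((Finset.Icc 1 m).image i) (i j + 1)
      = (∑ k ∈ Finset.Icc 1 ((m - j + 1) / 2),
          ((i (j + 2 * k) : ℤ) - (i (j + 2 * k - 1) : ℤ)))
        + (∑ k ∈ Finset.Icc 1 (j / 2),
          ((i (j - 2 * k + 1) : ℤ) - (i (j - 2 * k) : ℤ)))
        - (∑ k ∈ Finset.Icc 1 ((j + 1) / 2 - 1),
          ((i (j - 2 * k) : ℤ) - (i (j - 2 * k - 1) : ℤ)))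
        - (∑ k ∈ Finset.Icc 1 ((m - j) / 2),
          ((i (j + 2 * k + 1) : ℤ) - (i (j + 2 * k) : ℤ))) := by
  have hi : StrictMonoOn i (Set.Iic (m + 1)) :=
    strictMonoOn_of_lt_add_one Set.ordConnected_Iic fun k _ _ hk =>
      hmono k (by simpa using hk)
  have hijℓ : i j ≤ ℓ := by
    have := apply_lt_apply hi (show j < m + 1 by omega) le_rfl
    omega
  rw [deltaA_second_difference (apply_pos hi hj hjm) hijℓ,
    startingAt_at_eq htop hi hj hjm, endingAt_before_eq h0 hi hj hjm,
    endingAt_at_eq h0 hi hjm, startingAt_after_eq htop hi hjm]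
  ring

/-- `−δᶜ_{i_j−1} + 2δᶜ_{i_j} − δᶜ_{i_j+1} = S₁(j) + S₂(j) − T₁(j) − T₂(j)`. -/
theorem stmt7 (ℓ m : ℕ) (hℓ : 1 ≤ ℓ) (hm : 1 ≤ m)
    (i : ℕ → ℕ) (h0 : i 0 = 0) (htop : i (m + 1) = ℓ + 1)
    (hmono : ∀ k ≤ m, i k < i (k + 1))
    (j : ℕ) (hj : 1 ≤ j) (hjm : j ≤ m) :
    -(deltaA ℓ ((Finset.Icc 1 m).image i) (i j - 1))
      + 2 * deltaA ℓ ((Finset.Icc 1 m).image i) (i j)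
      - deltaA ℓ ((Finset.Icc 1 m).image i) (i j + 1)
      = (∑ k ∈ Finset.Icc 1 ((m - j + 1) / 2),
          ((i (j + 2 * k) : ℤ) - (i (j + 2 * k - 1) : ℤ)))
        + (∑ k ∈ Finset.Icc 1 (j / 2),
          ((i (j - 2 * k + 1) : ℤ) - (i (j - 2 * k) : ℤ)))
        - (∑ k ∈ Finset.Icc 1 ((j + 1) / 2 - 1),
          ((i (j - 2 * k) : ℤ) - (i (j - 2 * k - 1) : ℤ)))
        - (∑ k ∈ Finset.Icc 1 ((m - j) / 2),
          ((i (j + 2 * k + 1) : ℤ) - (i (j + 2 * k) : ℤ))) :=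
  stmt7_general ℓ m i h0 htop hmono j hj hjm
end

section
/- Let ℓ ≥ 1 and let S = {i₁ < ⋯ < i_m} ⊆ {1,…,ℓ} be nonempty, with conventions i₀ = 0 and i_{m+1} = ℓ+1. Consider the root system of type A_ℓ with simple roots γ₁,…,γ_ℓ, Cartan matrix A (A_{ii} = 2, A_{i,i±1} = −1, else 0), positive roots the interval sums Σ_{i=a}^{b} γ_i (1 ≤ a ≤ b ≤ ℓ), and call a positive root compact iff |S ∩ [a,b]| is even. Let R be the coefficient vector (in the basis γ₁,…,γ_ℓ) of the sum of all compact positive roots, and P the coefficient vector of the sum of all positive roots Σ_{i=a}^{b} γ_i with S ∩ [a,b] = ∅. Define ξ_i = −4 + 4(AR)_i − 2(AP)_i. Then for every 1 ≤ j ≤ m: ξ_{i_j} = 2( i_{j−1} − i_{j+1} + 2(S₊(j) − S₋(j)) ), where S₊(j) = Σ_{k=j+1}^{m} 2(−1)^{k−j} i_k + i_{j+1} + (−1)^{m−j+1}(ℓ+1) and S₋(j) = Σ_{k=1}^{j−1} 2(−1)^{k−j} i_k + i_{j−1}. -/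
/-- `n`-th coefficient of the sum of all compact positive roots of type `A_ℓ`
(intervals `[a,b]` with `|S ∩ [a,b]|` even). -/
def compactCoeffA (ℓ : ℕ) (S : Finset ℕ) (n : ℕ) : ℤ :=
  (((Finset.Icc 1 ℓ ×ˢ Finset.Icc 1 ℓ).filter
      (fun p => p.1 ≤ p.2 ∧ p.1 ≤ n ∧ n ≤ p.2 ∧
        Even ((S ∩ Finset.Icc p.1 p.2).card))).card : ℤ)

/-- `n`-th coefficient of the sum of all positive roots of type `A_ℓ` lying in the
span of the simple roots not indexed by `S` (intervals `[a,b]` with `S ∩ [a,b] = ∅`). -/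
def spanCoeffA (ℓ : ℕ) (S : Finset ℕ) (n : ℕ) : ℤ :=
  (((Finset.Icc 1 ℓ ×ˢ Finset.Icc 1 ℓ).filter
      (fun p => p.1 ≤ p.2 ∧ p.1 ≤ n ∧ n ≤ p.2 ∧
        S ∩ Finset.Icc p.1 p.2 = ∅)).card : ℤ)

/-- Application of the type `A_ℓ` Cartan matrix to a coefficient vector. -/
def cartanA (x : ℕ → ℤ) (t : ℕ) : ℤ := -x (t - 1) + 2 * x t - x (t + 1)

/-! The Cartan matrix turns the coefficient of `γ_t` in a sum of interval roots
`Σ_{a ≤ k ≤ b} γ_k` into a count of endpoints: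
`(A x)_t = #{a = t} - #{a = t + 1} + #{b = t} - #{b = t - 1}`.
For `t = i_j ∈ S`, dropping `t` from an interval that starts (or ends) at `t` flips the parity
of `|S ∩ [a, b]|`, so these differences become sums of signs over `b ∈ [t, ℓ]` and `a ∈ [1, t]`.
The sign is constant on each block `[i_k, i_{k+1})`, so the sums are alternating sums of the
block lengths `i_{k+1} - i_k`, and summation by parts gives the closed formula. The roots with
`S ∩ [a, b] = ∅` only see the two blocks adjacent to `i_j`. -/

open Finset

def intervalCount (ℓ : ℕ) (C : ℕ → ℕ → Prop) [DecidableRel C] (n : ℕ) : ℤ :=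
  #{p ∈ Icc 1 ℓ ×ˢ Icc 1 ℓ | p.1 ≤ p.2 ∧ p.1 ≤ n ∧ n ≤ p.2 ∧ C p.1 p.2}

lemma compactCoeffA_eq_intervalCount (ℓ : ℕ) (S : Finset ℕ) :
    compactCoeffA ℓ S = intervalCount ℓ fun a b => Even #(S ∩ Icc a b) :=
  rfl

lemma spanCoeffA_eq_intervalCount (ℓ : ℕ) (S : Finset ℕ) :
    spanCoeffA ℓ S = intervalCount ℓ fun a b => #(S ∩ Icc a b) = 0 := by
  funext n
  simp only [spanCoeffA, intervalCount, card_eq_zero]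

section IntervalCount

variable (ℓ : ℕ) (C : ℕ → ℕ → Prop) [DecidableRel C]

lemma intervalCount_eq_sum (n : ℕ) :
    intervalCount ℓ C n = ∑ a ∈ Icc 1 n, ∑ b ∈ Icc n ℓ, if C a b then 1 else 0 := by
  have : {p ∈ Icc 1 ℓ ×ˢ Icc 1 ℓ | p.1 ≤ p.2 ∧ p.1 ≤ n ∧ n ≤ p.2 ∧ C p.1 p.2}
      = {p ∈ Icc 1 n ×ˢ Icc n ℓ | C p.1 p.2} := by
    ext ⟨a, b⟩
    simp only [mem_filter, mem_product, mem_Icc]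
    grind
  rw [intervalCount, this, natCast_card_filter, sum_product]

lemma intervalCount_sub_intervalCount_succ {n : ℕ} (hn : n ≤ ℓ) :
    intervalCount ℓ C n - intervalCount ℓ C (n + 1)
      = (∑ a ∈ Icc 1 n, if C a n then 1 else 0)
        - ∑ b ∈ Icc (n + 1) ℓ, if C (n + 1) b then 1 else 0 := by
  simp only [intervalCount_eq_sum]
  rw [sum_Icc_succ_top (by omega), ← sum_congr rfl fun a _ =>
    add_sum_Ioc_eq_sum_Icc (f := fun b => if C a b then (1 : ℤ) else 0) hn,
    sum_add_distrib, Icc_add_one_left_eq_Ioc]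
  ring

lemma cartanA_intervalCount {t : ℕ} (ht : 1 ≤ t) (htℓ : t ≤ ℓ) :
    cartanA (intervalCount ℓ C) t
      = ((∑ b ∈ Icc t ℓ, if C t b then 1 else 0)
          - ∑ b ∈ Icc (t + 1) ℓ, if C (t + 1) b then 1 else 0)
        + ((∑ a ∈ Icc 1 t, if C a t then 1 else 0)
          - ∑ a ∈ Icc 1 (t - 1), if C a (t - 1) then 1 else 0) := by
  have hright := intervalCount_sub_intervalCount_succ ℓ C htℓ
  have hleft := intervalCount_sub_intervalCount_succ ℓ C (n := t - 1) (by omega)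
  rw [Nat.sub_add_cancel ht] at hleft
  rw [cartanA]
  linear_combination hright - hleft

end IntervalCount

def indicatorJump (P : ℕ → Prop) [DecidablePred P] (n : ℕ) : ℤ :=
  (if P (n + 1) then 1 else 0) - if P n then 1 else 0

lemma indicatorJump_even (n : ℕ) : indicatorJump Even n = -(-1) ^ n := by
  rcases Nat.even_or_odd n with h | h
  · simp [indicatorJump, h, h.neg_one_pow, Nat.even_add_one]
  · simp [indicatorJump, h.neg_one_pow, Nat.even_add_one, Nat.not_even_iff_odd.mpr h]

lemma indicatorJump_eq_zero (n : ℕ) : indicatorJump (· = 0) n = -if n = 0 then 1 else 0 := by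
  by_cases h : n = 0 <;> simp [indicatorJump, h]

section CardInter

variable {S : Finset ℕ}

lemma card_inter_Icc_of_mem_left {t b : ℕ} (ht : t ∈ S) (htb : t ≤ b) :
    #(S ∩ Icc t b) = #(S ∩ Icc (t + 1) b) + 1 := by
  rw [← insert_Icc_add_one_left_eq_Icc htb, inter_insert_of_mem ht, card_insert_of_notMem]
  simp

lemma card_inter_Icc_of_mem_right {a t : ℕ} (ht : t + 1 ∈ S) (hat : a ≤ t + 1) :
    #(S ∩ Icc a (t + 1)) = #(S ∩ Icc a t) + 1 := by
  rw [← insert_Icc_right_eq_Icc_add_one hat, inter_insert_of_mem ht, card_insert_of_notMem]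
  simp

variable (ℓ : ℕ) (P : ℕ → Prop) [DecidablePred P]

lemma sum_Icc_sub_sum_Icc_succ_left {t : ℕ} (htS : t ∈ S) (htℓ : t ≤ ℓ) :
    (∑ b ∈ Icc t ℓ, if P #(S ∩ Icc t b) then 1 else 0)
        - ∑ b ∈ Icc (t + 1) ℓ, (if P #(S ∩ Icc (t + 1) b) then 1 else 0 : ℤ)
      = (if P 0 then 1 else 0) + ∑ b ∈ Icc t ℓ, indicatorJump P #(S ∩ Icc (t + 1) b) := by
  have hshift : ∀ b ∈ Icc t ℓ, #(S ∩ Icc t b) = #(S ∩ Icc (t + 1) b) + 1 :=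
    fun b hb => card_inter_Icc_of_mem_left htS (mem_Icc.mp hb).1
  have hsplit : ∑ b ∈ Icc t ℓ, (if P #(S ∩ Icc (t + 1) b) then 1 else 0 : ℤ)
      = (if P 0 then 1 else 0) + ∑ b ∈ Icc (t + 1) ℓ, if P #(S ∩ Icc (t + 1) b) then 1 else 0 := by
    rw [Icc_add_one_left_eq_Ioc, ← add_sum_Ioc_eq_sum_Icc htℓ, Icc_eq_empty_of_lt (by omega),
      inter_empty, card_empty]
  simp only [indicatorJump, sum_sub_distrib]
  rw [sum_congr rfl fun b hb => by rw [hshift b hb], hsplit]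
  ring

lemma sum_Icc_sub_sum_Icc_pred_right {t : ℕ} (htS : t ∈ S) (ht : 1 ≤ t) :
    (∑ a ∈ Icc 1 t, if P #(S ∩ Icc a t) then 1 else 0)
        - ∑ a ∈ Icc 1 (t - 1), (if P #(S ∩ Icc a (t - 1)) then 1 else 0 : ℤ)
      = (if P 0 then 1 else 0) + ∑ a ∈ Icc 1 t, indicatorJump P #(S ∩ Icc a (t - 1)) := by
  obtain ⟨s, rfl⟩ : ∃ s, t = s + 1 := ⟨t - 1, by omega⟩
  have hshift : ∀ a ∈ Icc 1 (s + 1), #(S ∩ Icc a (s + 1)) = #(S ∩ Icc a s) + 1 :=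
    fun a ha => card_inter_Icc_of_mem_right htS (mem_Icc.mp ha).2
  have hsplit : ∑ a ∈ Icc 1 (s + 1), (if P #(S ∩ Icc a s) then 1 else 0 : ℤ)
      = (∑ a ∈ Icc 1 s, if P #(S ∩ Icc a s) then 1 else 0) + if P 0 then 1 else 0 := by
    rw [sum_Icc_succ_top ht, Icc_eq_empty_of_lt (Nat.lt_succ_self s), inter_empty, card_empty]
  simp only [indicatorJump, sum_sub_distrib, Nat.add_sub_cancel]
  rw [sum_congr rfl fun a ha => by rw [hshift a ha], hsplit]
  ring

lemma cartanA_intervalCount_card_inter {t : ℕ} (htS : t ∈ S) (ht : 1 ≤ t) (htℓ : t ≤ ℓ) :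
    cartanA (intervalCount ℓ fun a b => P #(S ∩ Icc a b)) t
      = 2 * (if P 0 then 1 else 0) + ∑ b ∈ Icc t ℓ, indicatorJump P #(S ∩ Icc (t + 1) b)
        + ∑ a ∈ Icc 1 t, indicatorJump P #(S ∩ Icc a (t - 1)) := by
  rw [cartanA_intervalCount ℓ _ ht htℓ, sum_Icc_sub_sum_Icc_succ_left ℓ P htS htℓ,
    sum_Icc_sub_sum_Icc_pred_right P htS ht]
  ring

end CardInter

lemma sum_Ico_eq_sum_blocks {M : Type*} [AddCommMonoid M] {f c : ℕ → M} {i : ℕ → ℕ} {u r : ℕ}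
    (hur : u ≤ r) (hi : MonotoneOn i (Set.Icc u r))
    (hf : ∀ k ∈ Ico u r, ∀ x ∈ Ico (i k) (i (k + 1)), f x = c k) :
    ∑ x ∈ Ico (i u) (i r), f x = ∑ k ∈ Ico u r, (i (k + 1) - i k) • c k := by
  induction r, hur using Nat.le_induction with
  | base => simp
  | succ r hur ih =>
    have hmem : ∀ {k}, u ≤ k → k ≤ r + 1 → k ∈ Set.Icc u (r + 1) := fun h₁ h₂ => ⟨h₁, h₂⟩
    rw [← sum_Ico_consecutive _ (hi (hmem le_rfl (by omega)) (hmem hur (by omega)) hur)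
        (hi (hmem hur (by omega)) (hmem (by omega) le_rfl) (by omega)),
      sum_Ico_succ_top hur, ih (hi.mono (Set.Icc_subset_Icc_right (by omega)))
        fun k hk => hf k (Ico_subset_Ico_right (by omega) hk),
      sum_congr rfl (hf r (by simp [hur])), sum_const, Nat.card_Ico]

lemma neg_one_pow_succ_sub {k n : ℕ} (h : k ≤ n) : (-1 : ℤ) ^ (n + 1 - k) = -(-1) ^ (n - k) := by
  rw [Nat.sub_add_comm h, pow_succ, mul_neg_one]

lemma sum_Ico_neg_one_pow_mul_sub (x : ℕ → ℤ) {j m : ℕ} (h : j ≤ m) :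
    ∑ k ∈ Ico j (m + 1), (-1) ^ (k - j) * (x (k + 1) - x k)
      = -x j - ∑ k ∈ Icc (j + 1) m, 2 * (-1) ^ (k - j) * x k + (-1) ^ (m - j) * x (m + 1) := by
  induction m, h using Nat.le_induction with
  | base =>
    rw [Nat.Ico_succ_singleton, sum_singleton, Icc_eq_empty_of_lt (Nat.lt_succ_self j), sum_empty,
      Nat.sub_self]
    ring
  | succ m h ih =>
    rw [sum_Ico_succ_top (by omega), ih, sum_Icc_succ_top (by omega), neg_one_pow_succ_sub h]
    ring

lemma sum_Ico_zero_neg_one_pow_mul_sub (x : ℕ → ℤ) {j : ℕ} (hj : 1 ≤ j) :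
    ∑ k ∈ Ico 0 j, (-1) ^ (j - 1 - k) * (x (k + 1) - x k)
      = x j + ∑ k ∈ Icc 1 (j - 1), 2 * (-1) ^ (j - k) * x k - (-1) ^ (j - 1) * x 0 := by
  obtain ⟨n, rfl⟩ : ∃ n, j = n + 1 := ⟨j - 1, by omega⟩
  clear hj
  simp only [Nat.add_sub_cancel]
  induction n with
  | zero => simp
  | succ n ih =>
    have hflip : ∀ k ∈ Ico 0 (n + 1), (-1 : ℤ) ^ (n + 1 - k) * (x (k + 1) - x k)
        = -((-1) ^ (n - k) * (x (k + 1) - x k)) := fun k hk => by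
      rw [neg_one_pow_succ_sub (by have := mem_Ico.mp hk; omega), neg_mul]
    have hflip' : ∀ k ∈ Icc 1 n, 2 * (-1 : ℤ) ^ (n + 1 + 1 - k) * x k
        = -(2 * (-1) ^ (n + 1 - k) * x k) := fun k hk => by
      rw [neg_one_pow_succ_sub (by have := mem_Icc.mp hk; omega)]
      ring
    rw [sum_Ico_succ_top (by omega), sum_congr rfl hflip, sum_neg_distrib, ih,
      sum_Icc_succ_top (by omega), sum_congr rfl hflip', sum_neg_distrib]
    simp only [Nat.sub_self, Nat.add_sub_cancel_left, pow_zero, pow_succ]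
    ring

lemma StrictMonoOn.apply_lt_apply_add_one {β : Type*} [Preorder β] {i : ℕ → β} {m k : ℕ}
    (hi : StrictMonoOn i (Set.Iic (m + 1))) (hk : k ≤ m) : i k < i (k + 1) :=
  hi (Set.mem_Iic.mpr (by omega)) (Set.mem_Iic.mpr (by omega)) (Nat.lt_succ_self k)

section Blocks

variable {m : ℕ} {i : ℕ → ℕ}

lemma card_image_inter_Icc (hi : StrictMonoOn i (Set.Iic (m + 1))) {q k a b : ℕ} (hq : q ≤ m)
    (hk : k ≤ m) (hqa : i q < a) (haq : a ≤ i (q + 1)) (hkb : i k ≤ b) (hbk : b < i (k + 1)) :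
    #((Icc 1 m).image i ∩ Icc a b) = k - q := by
  have hle : ∀ {r s}, r ≤ m + 1 → s ≤ m + 1 → (i r ≤ i s ↔ r ≤ s) := fun hr hs =>
    hi.le_iff_le (Set.mem_Iic.mpr hr) (Set.mem_Iic.mpr hs)
  have : (Icc 1 m).image i ∩ Icc a b = (Ioc q k).image i := by
    ext x
    simp only [mem_inter, mem_image, mem_Icc, mem_Ioc]
    constructor
    · rintro ⟨⟨r, hr, rfl⟩, hai, hib⟩
      refine ⟨r, ⟨?_, ?_⟩, rfl⟩
      · by_contra! h
        have := (hle (by omega) (by omega)).mpr h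
        omega
      · by_contra! h
        have := (hle (r := k + 1) (by omega) (by omega)).mpr h
        omega
    · rintro ⟨r, hr, rfl⟩
      have h₁ := (hle (r := q + 1) (s := r) (by omega) (by omega)).mpr hr.1
      have h₂ := (hle (r := r) (s := k) (by omega) (by omega)).mpr hr.2
      exact ⟨⟨r, ⟨by omega, by omega⟩, rfl⟩, by omega, by omega⟩
  rw [this, card_image_of_injOn (hi.injOn.mono fun r hr => ?_), Nat.card_Ioc]
  simp only [coe_Ioc, Set.mem_Ioc] at hr
  exact Set.mem_Iic.mpr (by omega)

lemma sum_Icc_right_eq_sum_blocks (hi : StrictMonoOn i (Set.Iic (m + 1))) (g : ℕ → ℤ)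
    {j ℓ : ℕ} (hj : j ≤ m) (htop : i (m + 1) = ℓ + 1) :
    ∑ b ∈ Icc (i j) ℓ, g #((Icc 1 m).image i ∩ Icc (i j + 1) b)
      = ∑ k ∈ Ico j (m + 1), g (k - j) * ((i (k + 1) : ℤ) - i k) := by
  rw [← Ico_add_one_right_eq_Icc, ← htop,
    sum_Ico_eq_sum_blocks (c := fun k => g (k - j)) (by omega)
      (hi.monotoneOn.mono fun k hk => Set.mem_Iic.mpr hk.2) fun k hk x hx => ?_]
  · refine sum_congr rfl fun k hk => ?_
    rw [nsmul_eq_mul, Nat.cast_sub (hi.apply_lt_apply_add_one (by have := mem_Ico.mp hk; omega)).le,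
      mul_comm]
  · simp only [mem_Ico] at hk hx
    rw [card_image_inter_Icc hi hj (by omega) (Nat.lt_succ_self _)
      (hi.apply_lt_apply_add_one hj) hx.1 hx.2]

lemma sum_Icc_left_eq_sum_blocks (hi : StrictMonoOn i (Set.Iic (m + 1))) (g : ℕ → ℤ) {j : ℕ}
    (hj : 1 ≤ j) (hjm : j ≤ m + 1) (h0 : i 0 = 0) :
    ∑ a ∈ Icc 1 (i j), g #((Icc 1 m).image i ∩ Icc a (i j - 1))
      = ∑ k ∈ Ico 0 j, g (j - 1 - k) * ((i (k + 1) : ℤ) - i k) := by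
  have hjpred := hi.apply_lt_apply_add_one (k := j - 1) (by omega)
  rw [Nat.sub_add_cancel hj] at hjpred
  have hshift : ∑ a ∈ Icc 1 (i j), g #((Icc 1 m).image i ∩ Icc a (i j - 1))
      = ∑ x ∈ Ico (i 0) (i j), g #((Icc 1 m).image i ∩ Icc (x + 1) (i j - 1)) := by
    rw [h0, sum_Ico_add' (fun a => g #((Icc 1 m).image i ∩ Icc a (i j - 1))), zero_add,
      Ico_add_one_right_eq_Icc]
  rw [hshift, sum_Ico_eq_sum_blocks (c := fun k => g (j - 1 - k)) (by omega)
      (hi.monotoneOn.mono fun k hk => Set.mem_Iic.mpr (by have := hk.2; omega)) fun k hk x hx => ?_]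
  · refine sum_congr rfl fun k hk => ?_
    rw [nsmul_eq_mul, Nat.cast_sub (hi.apply_lt_apply_add_one (by have := mem_Ico.mp hk; omega)).le,
      mul_comm]
  · simp only [mem_Ico] at hk hx
    rw [card_image_inter_Icc hi (q := k) (k := j - 1) (by omega) (by omega) (by omega) (by omega)
      (by omega) (by rw [Nat.sub_add_cancel hj]; omega)]

lemma cartanA_intervalCount_image (hi : StrictMonoOn i (Set.Iic (m + 1))) (P : ℕ → Prop)
    [DecidablePred P] {ℓ j : ℕ} (h0 : i 0 = 0) (htop : i (m + 1) = ℓ + 1) (hj : 1 ≤ j)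
    (hjm : j ≤ m) :
    cartanA (intervalCount ℓ fun a b => P #((Icc 1 m).image i ∩ Icc a b)) (i j)
      = 2 * (if P 0 then 1 else 0)
        + ∑ k ∈ Ico j (m + 1), indicatorJump P (k - j) * ((i (k + 1) : ℤ) - i k)
        + ∑ k ∈ Ico 0 j, indicatorJump P (j - 1 - k) * ((i (k + 1) : ℤ) - i k) := by
  have hpos : i 0 < i j := hi (Set.mem_Iic.mpr (by omega)) (Set.mem_Iic.mpr (by omega)) (by omega)
  have hlt : i j < i (m + 1) :=
    hi (Set.mem_Iic.mpr (by omega)) (Set.mem_Iic.mpr le_rfl) (by omega)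
  rw [cartanA_intervalCount_card_inter ℓ P (mem_image_of_mem i (mem_Icc.mpr ⟨hj, hjm⟩))
      (by omega) (by omega), sum_Icc_right_eq_sum_blocks hi (indicatorJump P) hjm htop,
    sum_Icc_left_eq_sum_blocks hi (indicatorJump P) hj (by omega) h0]

lemma cartanA_compactCoeffA (hi : StrictMonoOn i (Set.Iic (m + 1))) {ℓ j : ℕ} (h0 : i 0 = 0)
    (htop : i (m + 1) = ℓ + 1) (hj : 1 ≤ j) (hjm : j ≤ m) :
    cartanA (compactCoeffA ℓ ((Icc 1 m).image i)) (i j)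
      = 2 - ∑ k ∈ Ico j (m + 1), (-1) ^ (k - j) * ((i (k + 1) : ℤ) - i k)
        - ∑ k ∈ Ico 0 j, (-1) ^ (j - 1 - k) * ((i (k + 1) : ℤ) - i k) := by
  rw [compactCoeffA_eq_intervalCount, cartanA_intervalCount_image hi Even h0 htop hj hjm]
  simp only [indicatorJump_even, neg_mul, sum_neg_distrib, Even.zero, if_true]
  ring

lemma cartanA_spanCoeffA (hi : StrictMonoOn i (Set.Iic (m + 1))) {ℓ j : ℕ} (h0 : i 0 = 0)
    (htop : i (m + 1) = ℓ + 1) (hj : 1 ≤ j) (hjm : j ≤ m) :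
    cartanA (spanCoeffA ℓ ((Icc 1 m).image i)) (i j) = 2 - i (j + 1) + i (j - 1) := by
  rw [spanCoeffA_eq_intervalCount, cartanA_intervalCount_image hi (· = 0) h0 htop hj hjm]
  simp only [indicatorJump_eq_zero, neg_mul, sum_neg_distrib, if_true]
  rw [sum_eq_single_of_mem j (by simp [hjm]) fun k hk hkj => by
      rw [if_neg (by have := mem_Ico.mp hk; omega), zero_mul],
    sum_eq_single_of_mem (j - 1) (by simp; omega) fun k hk hkj => by
      rw [if_neg (by have := mem_Ico.mp hk; omega), zero_mul],
    Nat.sub_add_cancel hj]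
  simp only [Nat.sub_self, if_true, one_mul]
  ring

end Blocks

theorem stmt8_general (ℓ m : ℕ)
    (i : ℕ → ℕ) (h0 : i 0 = 0) (htop : i (m + 1) = ℓ + 1)
    (hmono : ∀ k ≤ m, i k < i (k + 1))
    (j : ℕ) (hj : 1 ≤ j) (hjm : j ≤ m) :
    -4 + 4 * cartanA (compactCoeffA ℓ ((Finset.Icc 1 m).image i)) (i j)
      - 2 * cartanA (spanCoeffA ℓ ((Finset.Icc 1 m).image i)) (i j)
      = 2 * ((i (j - 1) : ℤ) - (i (j + 1) : ℤ)
        + 2 * (((∑ k ∈ Finset.Icc (j + 1) m, 2 * (-1 : ℤ) ^ (k - j) * (i k : ℤ))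
            + (i (j + 1) : ℤ) + (-1 : ℤ) ^ (m - j + 1) * ((ℓ : ℤ) + 1))
          - ((∑ k ∈ Finset.Icc 1 (j - 1), 2 * (-1 : ℤ) ^ (j - k) * (i k : ℤ))
            + (i (j - 1) : ℤ)))) := by
  have hi : StrictMonoOn i (Set.Iic (m + 1)) :=
    strictMonoOn_Iic_of_lt_succ fun k hk => by simpa using hmono k (by omega)
  have hright := sum_Ico_neg_one_pow_mul_sub (fun k => (i k : ℤ)) hjm
  have hleft := sum_Ico_zero_neg_one_pow_mul_sub (fun k => (i k : ℤ)) hj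
  simp only [htop, h0, Nat.cast_add, Nat.cast_one, Nat.cast_zero] at hright hleft
  rw [cartanA_compactCoeffA hi h0 htop hj hjm, cartanA_spanCoeffA hi h0 htop hj hjm]
  linear_combination (-4) * hright - 4 * hleft

/-- Theorem 3.2 of the paper, type `A_ℓ`:
`ξ_{i_j} = 2(i_{j−1} − i_{j+1} + 2(S₊(j) − S₋(j)))`. -/
theorem stmt8 (ℓ m : ℕ) (hℓ : 1 ≤ ℓ) (hm : 1 ≤ m)
    (i : ℕ → ℕ) (h0 : i 0 = 0) (htop : i (m + 1) = ℓ + 1)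
    (hmono : ∀ k ≤ m, i k < i (k + 1))
    (j : ℕ) (hj : 1 ≤ j) (hjm : j ≤ m) :
    -4 + 4 * cartanA (compactCoeffA ℓ ((Finset.Icc 1 m).image i)) (i j)
      - 2 * cartanA (spanCoeffA ℓ ((Finset.Icc 1 m).image i)) (i j)
      = 2 * ((i (j - 1) : ℤ) - (i (j + 1) : ℤ)
        + 2 * (((∑ k ∈ Finset.Icc (j + 1) m, 2 * (-1 : ℤ) ^ (k - j) * (i k : ℤ))
            + (i (j + 1) : ℤ) + (-1 : ℤ) ^ (m - j + 1) * ((ℓ : ℤ) + 1))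
          - ((∑ k ∈ Finset.Icc 1 (j - 1), 2 * (-1 : ℤ) ^ (j - k) * (i k : ℤ))
            + (i (j - 1) : ℤ)))) :=
  stmt8_general ℓ m i h0 htop hmono j hj hjm
end

section
/- Let ℓ ≥ 2 and let S = {i₁ < ⋯ < i_m} ⊆ {1,…,ℓ} be nonempty with i_m < ℓ (convention i₀ = 0). In the root system of type B_ℓ, the positive roots are Σ_{i=a}^{b} γ_i (1 ≤ a ≤ b ≤ ℓ) and Σ_{i=a}^{b} γ_i + Σ_{i=b+1}^{ℓ} 2γ_i (1 ≤ a ≤ b ≤ ℓ−1); call such a root compact iff |S ∩ [a,b]| is even, and relevant if moreover its support involves at least one index of S (i.e., it does not lie in the span of {γ_i : i ∉ S}). Let δᶜ ∈ ℤ^ℓ be the coefficient vector of the sum of all relevant compact positive roots. Then −δᶜ_{i_m−1} + 2δᶜ_{i_m} − δᶜ_{i_m+1} = i_m − i_{m−1} − 1, where δᶜ_0 = 0. -/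
/-!
At an index `n`, the second difference `-f (n - 1) + 2 f n - f (n + 1)` of the coefficient
vector of `Σ_{a ≤ i ≤ b} γ_i` is `[a = n] - [a = n + 1] + [b = n] - [b = n - 1]`, and that of
`Σ_{a ≤ i ≤ b} γ_i + 2 Σ_{b < i ≤ ℓ} γ_i` is `[a = n] - [a = n + 1] + [b = n - 1] - [b = n]`
(for `n < ℓ`). Take `n = i_m = max S`. No relevant compact root starts at `n` (`S ∩ [n, b] = {n}`
has odd size) or at `n + 1` (it meets no index of `S`). As `S` has nothing above `n`, the roots
of the two kinds ending at `n` are relevant and compact together and cancel. A root of the second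
kind ending at `n - 1` has parity `|S ∩ [a, n - 1]| + 2`, so it counts whenever
`|S ∩ [a, n - 1]|` is even, while the first kind also needs `S ∩ [a, n - 1] ≠ ∅`: the surplus is
the `n - 1 - i_{m-1}` starting points `i_{m-1} < a < n`.
-/

/-- `n`-th coefficient of the sum of all relevant compact positive roots of type `B_ℓ`.
Positive roots are `Σ_{i=a}^{b} γ_i` (`1 ≤ a ≤ b ≤ ℓ`) and
`Σ_{i=a}^{b} γ_i + Σ_{i=b+1}^{ℓ} 2γ_i` (`1 ≤ a ≤ b ≤ ℓ−1`); a root `Σ nᵢγᵢ` is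
compact iff `Σ_{i∈S} nᵢ` is even, and relevant iff moreover `Σ_{i∈S} nᵢ > 0`. -/
def deltaB (ℓ : ℕ) (S : Finset ℕ) (n : ℕ) : ℤ :=
  (∑ p ∈ (Finset.Icc 1 ℓ ×ˢ Finset.Icc 1 ℓ).filter
      (fun p => p.1 ≤ p.2 ∧
        Even ((S ∩ Finset.Icc p.1 p.2).card) ∧
        0 < (S ∩ Finset.Icc p.1 p.2).card),
      (if p.1 ≤ n ∧ n ≤ p.2 then (1 : ℤ) else 0))
  + ∑ p ∈ (Finset.Icc 1 ℓ ×ˢ Finset.Icc 1 (ℓ - 1)).filter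
      (fun p => p.1 ≤ p.2 ∧
        Even ((S ∩ Finset.Icc p.1 p.2).card + 2 * (S ∩ Finset.Icc (p.2 + 1) ℓ).card) ∧
        0 < (S ∩ Finset.Icc p.1 p.2).card + 2 * (S ∩ Finset.Icc (p.2 + 1) ℓ).card),
      ((if p.1 ≤ n ∧ n ≤ p.2 then (1 : ℤ) else 0)
        + (if p.2 + 1 ≤ n ∧ n ≤ ℓ then (2 : ℤ) else 0))

open Finset

def secondDiff (f : ℕ → ℤ) (n : ℕ) : ℤ :=
  -f (n - 1) + 2 * f n - f (n + 1)

lemma secondDiff_add (f g : ℕ → ℤ) (n : ℕ) :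
    secondDiff (fun k => f k + g k) n = secondDiff f n + secondDiff g n := by
  simp only [secondDiff]; ring

lemma secondDiff_sum {ι : Type*} (s : Finset ι) (f : ι → ℕ → ℤ) (n : ℕ) :
    secondDiff (fun k => ∑ i ∈ s, f i k) n = ∑ i ∈ s, secondDiff (f i) n := by
  simp only [secondDiff, sum_add_distrib, sum_sub_distrib, sum_neg_distrib, mul_sum]

lemma sum_filter_product_ite_snd_eq {α β : Type*} [DecidableEq β] (A : Finset α) (B : Finset β)
    (P : α × β → Prop) [DecidablePred P] {c : β} (hc : ∀ a ∈ A, P (a, c) → c ∈ B) :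
    ∑ p ∈ (A ×ˢ B).filter P, (if p.2 = c then (1 : ℤ) else 0) = #(A.filter fun a => P (a, c)) := by
  rw [sum_filter, sum_product_right]
  by_cases hcB : c ∈ B
  · rw [sum_eq_single_of_mem c hcB fun b _ hbc => by simp [hbc]]
    simp [sum_boole]
  · rw [sum_eq_zero fun b hb => by simp [show b ≠ c by rintro rfl; exact hcB hb]]
    rw [eq_comm, Nat.cast_eq_zero, card_eq_zero, filter_eq_empty_iff]
    exact fun a ha hP => hcB (hc a ha hP)

lemma card_filter_even_eq_add {α : Type*} (s : Finset α) (P : α → Prop) [DecidablePred P]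
    (f : α → ℕ) :
    #(s.filter fun a => P a ∧ Even (f a)) =
      #(s.filter fun a => P a ∧ Even (f a) ∧ 0 < f a) + #(s.filter fun a => P a ∧ f a = 0) := by
  rw [← card_filter_add_card_filter_not (s := s.filter _) (fun a => 0 < f a), filter_filter,
    filter_filter]
  congr 2 <;> ext a <;> simp only [mem_filter, and_assoc, not_lt, Nat.le_zero]
  exact and_congr_right fun _ => and_congr_right fun _ => and_iff_right_of_imp fun h => by simp [h]

section Greatest

variable {S : Finset ℕ} {n : ℕ}

lemma card_inter_Icc_eq_zero_of_lt (hS : n ∈ upperBounds (S : Set ℕ)) {a : ℕ} (ha : n < a)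
    (b : ℕ) : #(S ∩ Icc a b) = 0 := by
  rw [card_eq_zero, eq_empty_iff_forall_notMem]
  intro x hx
  rw [mem_inter, mem_Icc] at hx
  have := hS hx.1
  omega

lemma card_inter_Icc_eq_one (hS : IsGreatest (S : Set ℕ) n) {b : ℕ} (hb : n ≤ b) :
    #(S ∩ Icc n b) = 1 := by
  rw [card_eq_one]
  refine ⟨n, eq_singleton_iff_unique_mem.2 ⟨mem_inter.2 ⟨hS.1, mem_Icc.2 ⟨le_rfl, hb⟩⟩, ?_⟩⟩
  intro x hx
  rw [mem_inter, mem_Icc] at hx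
  exact le_antisymm (hS.2 hx.1) hx.2.1

lemma secondDiff_ite_Icc_of_isGreatest (hS : IsGreatest (S : Set ℕ) n) {a b : ℕ} (hab : a ≤ b)
    (heven : Even #(S ∩ Icc a b)) (hpos : 0 < #(S ∩ Icc a b)) :
    secondDiff (fun k => if a ≤ k ∧ k ≤ b then (1 : ℤ) else 0) n =
      (if b = n then 1 else 0) - (if b = n - 1 then 1 else 0) := by
  have han : a < n := by
    rcases lt_trichotomy a n with h | rfl | h
    · exact h
    · rw [card_inter_Icc_eq_one hS hab] at heven
      exact absurd heven Nat.not_even_one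
    · rw [card_inter_Icc_eq_zero_of_lt hS.2 h] at hpos
      exact absurd hpos (lt_irrefl 0)
  simp only [secondDiff]
  split_ifs <;> omega

lemma secondDiff_ite_Icc_add_two_of_isGreatest (hS : IsGreatest (S : Set ℕ) n) {ℓ a b : ℕ}
    (hab : a ≤ b) (hnℓ : n < ℓ) (heven : Even (#(S ∩ Icc a b) + 2 * #(S ∩ Icc (b + 1) ℓ)))
    (hpos : 0 < #(S ∩ Icc a b) + 2 * #(S ∩ Icc (b + 1) ℓ)) :
    secondDiff (fun k => (if a ≤ k ∧ k ≤ b then (1 : ℤ) else 0)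
        + (if b + 1 ≤ k ∧ k ≤ ℓ then (2 : ℤ) else 0)) n =
      (if b = n - 1 then 1 else 0) - (if b = n then 1 else 0) := by
  have han : a < n := by
    rcases lt_trichotomy a n with h | rfl | h
    · exact h
    · rw [card_inter_Icc_eq_one hS hab] at heven
      obtain ⟨k, hk⟩ := heven
      omega
    · rw [card_inter_Icc_eq_zero_of_lt hS.2 h, card_inter_Icc_eq_zero_of_lt hS.2 (by omega)]
        at hpos
      exact absurd hpos (lt_irrefl 0)
  simp only [secondDiff]
  split_ifs <;> omega

lemma filter_card_inter_Icc_eq_zero {ℓ q : ℕ} (hnℓ : n ≤ ℓ) (hqn : q < n) (hq : q = 0 ∨ q ∈ S)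
    (hgap : ∀ x ∈ S, x < n → x ≤ q) :
    (Icc 1 ℓ).filter (fun a => a ≤ n - 1 ∧ #(S ∩ Icc a (n - 1)) = 0) = Icc (q + 1) (n - 1) := by
  ext a
  simp only [mem_filter, mem_Icc, card_eq_zero, eq_empty_iff_forall_notMem, mem_inter, not_and,
    not_le]
  constructor
  · rintro ⟨⟨ha1, -⟩, han, hempty⟩
    refine ⟨?_, han⟩
    by_contra! haq
    rcases hq with rfl | hqS
    · omega
    · have := hempty q hqS (by omega)
      omega
  · rintro ⟨hqa, han⟩
    refine ⟨⟨by omega, by omega⟩, han, fun x hxS hax => ?_⟩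
    by_contra! hxn
    have := hgap x hxS (by omega)
    omega

theorem secondDiff_deltaB {ℓ q : ℕ} (hS : IsGreatest (S : Set ℕ) n) (hnℓ : n < ℓ) (hqn : q < n)
    (hq : q = 0 ∨ q ∈ S) (hgap : ∀ x ∈ S, x < n → x ≤ q) :
    secondDiff (deltaB ℓ S) n = n - q - 1 := by
  unfold deltaB
  rw [secondDiff_add, secondDiff_sum, secondDiff_sum]
  rw [sum_congr rfl fun p hp => have hp := (mem_filter.1 hp).2
      secondDiff_ite_Icc_of_isGreatest hS hp.1 hp.2.1 hp.2.2,
    sum_congr rfl fun p hp => have hp := (mem_filter.1 hp).2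
      secondDiff_ite_Icc_add_two_of_isGreatest hS hp.1 hnℓ hp.2.1 hp.2.2]
  simp only [sum_sub_distrib]
  rw [sum_filter_product_ite_snd_eq, sum_filter_product_ite_snd_eq, sum_filter_product_ite_snd_eq,
    sum_filter_product_ite_snd_eq]
  · have hzero : #(S ∩ Icc (n + 1) ℓ) = 0 := card_inter_Icc_eq_zero_of_lt hS.2 n.lt_succ_self ℓ
    have hone : #(S ∩ Icc (n - 1 + 1) ℓ) = 1 := by
      rw [Nat.sub_add_cancel (by omega)]
      exact card_inter_Icc_eq_one hS hnℓ.le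
    simp only [hzero, hone, mul_zero, add_zero, mul_one, Nat.even_add, even_two, iff_true,
      add_pos_iff, Nat.ofNat_pos, or_true, and_true]
    rw [card_filter_even_eq_add (Icc 1 ℓ) (· ≤ n - 1) (fun a => #(S ∩ Icc a (n - 1))),
      filter_card_inter_Icc_eq_zero hnℓ.le hqn hq hgap, Nat.card_Icc]
    push_cast
    omega
  all_goals rintro a ha ⟨hab, -⟩; simp only [mem_Icc] at ha hab ⊢; omega

end Greatest

section StrictMonoOn

variable {i : ℕ → ℕ} {m : ℕ}

lemma isGreatest_image_Icc (hi : MonotoneOn i (Set.Iic m)) (hm : 1 ≤ m) :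
    IsGreatest (((Icc 1 m).image i : Finset ℕ) : Set ℕ) (i m) := by
  refine ⟨mem_image_of_mem i (mem_Icc.2 ⟨hm, le_rfl⟩), ?_⟩
  rintro _ hx
  obtain ⟨k, hk, rfl⟩ := mem_image.1 hx
  exact hi (Set.mem_Iic.2 (mem_Icc.1 hk).2) Set.self_mem_Iic (mem_Icc.1 hk).2

lemma le_of_mem_image_Icc_of_lt (hi : StrictMonoOn i (Set.Iic m)) {x : ℕ}
    (hx : x ∈ (Icc 1 m).image i) (hxm : x < i m) : x ≤ i (m - 1) := by
  obtain ⟨k, hk, rfl⟩ := mem_image.1 hx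
  have hkm : k < m := (hi.lt_iff_lt (Set.mem_Iic.2 (mem_Icc.1 hk).2) Set.self_mem_Iic).1 hxm
  exact hi.monotoneOn (Set.mem_Iic.2 hkm.le) (Set.mem_Iic.2 (Nat.sub_le m 1)) (by omega)

end StrictMonoOn

theorem stmt9_general (ℓ m : ℕ) (hm : 1 ≤ m)
    (i : ℕ → ℕ) (h0 : i 0 = 0)
    (hmono : ∀ k ≤ m, i k < i (k + 1)) (him : i m < ℓ) :
    -(deltaB ℓ ((Finset.Icc 1 m).image i) (i m - 1))
      + 2 * deltaB ℓ ((Finset.Icc 1 m).image i) (i m)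
      - deltaB ℓ ((Finset.Icc 1 m).image i) (i m + 1)
      = (i m : ℤ) - (i (m - 1) : ℤ) - 1 := by
  have hi : StrictMonoOn i (Set.Iic m) :=
    strictMonoOn_Iic_of_lt_succ fun k hk => by simpa using hmono k hk.le
  have hprev : i (m - 1) = 0 ∨ i (m - 1) ∈ (Icc 1 m).image i := by
    rcases Nat.lt_or_ge 1 m with h | h
    · exact .inr (mem_image_of_mem i (mem_Icc.2 ⟨by omega, Nat.sub_le m 1⟩))
    · exact .inl (by rw [show m - 1 = 0 by omega, h0])
  exact secondDiff_deltaB (isGreatest_image_Icc hi.monotoneOn hm) him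
    (hi (Set.mem_Iic.2 (Nat.sub_le m 1)) Set.self_mem_Iic (by omega)) hprev
    fun x hx => le_of_mem_image_Icc_of_lt hi hx

/-- type `B_ℓ`, case `j = m`, `i_m < ℓ`:
`−δᶜ_{i_m−1} + 2δᶜ_{i_m} − δᶜ_{i_m+1} = i_m − i_{m−1} − 1`. -/
theorem stmt9 (ℓ m : ℕ) (hℓ : 2 ≤ ℓ) (hm : 1 ≤ m)
    (i : ℕ → ℕ) (h0 : i 0 = 0)
    (hmono : ∀ k ≤ m, i k < i (k + 1)) (him : i m < ℓ) :
    -(deltaB ℓ ((Finset.Icc 1 m).image i) (i m - 1))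
      + 2 * deltaB ℓ ((Finset.Icc 1 m).image i) (i m)
      - deltaB ℓ ((Finset.Icc 1 m).image i) (i m + 1)
      = (i m : ℤ) - (i (m - 1) : ℤ) - 1 :=
  stmt9_general ℓ m hm i h0 hmono him
end

section
/- Let ℓ ≥ 1 and let S = {i₁ < ⋯ < i_m} ⊆ {1,…,ℓ} be nonempty, with conventions i₀ = 0 and i_{m+1} = ℓ+1. Then the number of integers n with 1 ≤ n ≤ i_j − 1 such that |S ∩ {n, …, i_j − 1}| is even (including zero) equals T₁(j) + (i_j − i_{j−1} − 1), where T₁(j) = Σ_{k=1}^{⌊(j+1)/2⌋−1} (i_{j−2k} − i_{j−2k−1}). -/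
/-!
Write `S = {a 1 < ⋯ < a m}` with `a 0 = 0`. If `a (k - 1) < n ≤ a k`, exactly the `j - k`
points `a k, …, a (j - 1)` of `S` lie in `[n, a j - 1]`, so the parity is constant on each block
`(a (k - 1), a k]`. Passing from `j` to `j + 2` adds two points above every `n ≤ a j` (parity
unchanged, and `n = a j` becomes a new even point), makes the block `(a j, a (j + 1)]` odd and
the block `(a (j + 1), a (j + 2))` even. Hence the count `E j` of even `n` satisfies
`E (j + 2) = E j + a (j + 2) - a (j + 1)`, which, started from `E 1 = a 1 - 1` and
`E 2 = a 2 - a 1 - 1`, telescopes to the stated sum.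
-/

open Finset

theorem Finset.sum_Icc_one_add_one' {M : Type*} [AddCommMonoid M] (g : ℕ → M) (N : ℕ) :
    ∑ k ∈ Icc 1 (N + 1), g k = g 1 + ∑ k ∈ Icc 1 N, g (k + 1) := by
  rw [← Ico_add_one_right_eq_Icc, sum_eq_sum_Ico_succ_bot (by omega), ← Ico_add_one_right_eq_Icc,
    sum_Ico_add']

namespace EvenTailCount

variable {a : ℕ → ℕ} {j k m n : ℕ}

def tailCount (a : ℕ → ℕ) (j n : ℕ) : ℕ := #{t ∈ Ico 1 j | n ≤ a t}

def evenTailCount (a : ℕ → ℕ) (j : ℕ) : ℕ := #{n ∈ Ico 1 (a j) | Even (tailCount a j n)}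

lemma tailCount_add_one (hj : 1 ≤ j) (hn : n ≤ a j) :
    tailCount a (j + 1) n = tailCount a j n + 1 := by
  rw [tailCount, ← insert_Ico_right_eq_Ico_add_one hj, filter_insert, if_pos hn,
    card_insert_of_notMem (by simp), tailCount]

lemma tailCount_eq_sub (ha : StrictMonoOn a (Set.Iic j)) (hkj : k ≤ j) (hlo : a (k - 1) < n)
    (hhi : n ≤ a k) : tailCount a j n = j - k := by
  have hk : 1 ≤ k := by
    rcases k with _ | k
    · exact absurd hlo (by simpa using hhi)
    · omega
  rw [tailCount, ← Nat.card_Ico k j]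
  congr 1
  ext t
  simp only [mem_filter, mem_Ico]
  constructor
  · rintro ⟨⟨-, htj⟩, hnt⟩
    refine ⟨?_, htj⟩
    by_contra! htk
    have := ha.monotoneOn (show t ∈ Set.Iic j by simp; omega)
      (show k - 1 ∈ Set.Iic j by simp; omega) (by omega : t ≤ k - 1)
    omega
  · rintro ⟨hkt, htj⟩
    exact ⟨⟨by omega, htj⟩, hhi.trans (ha.monotoneOn (by simpa using hkj)
      (by simp; omega) hkt)⟩

lemma card_image_inter_Icc_eq_tailCount (ha : StrictMonoOn a (Set.Iic m)) (hjm : j ≤ m) (n : ℕ) :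
    #((Icc 1 m).image a ∩ Icc n (a j - 1)) = tailCount a j n := by
  have hlt : ∀ t ≤ m, (a t < a j ↔ t < j) := fun t ht =>
    ha.lt_iff_lt (by simpa using ht) (by simpa using hjm)
  have hpos : ∀ t, 1 ≤ t → t ≤ m → a 0 < a t := fun t h1 ht =>
    ha (by simp) (by simpa using ht) (by omega)
  have hset : (Icc 1 m).image a ∩ Icc n (a j - 1) = {t ∈ Ico 1 j | n ≤ a t}.image a := by
    ext x
    simp only [mem_inter, mem_image, mem_Icc, mem_filter, mem_Ico]
    constructor
    · rintro ⟨⟨t, ⟨ht1, htm⟩, rfl⟩, hnt, htj⟩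
      have := hpos t ht1 htm
      exact ⟨t, ⟨⟨ht1, (hlt t htm).1 (by omega)⟩, hnt⟩, rfl⟩
    · rintro ⟨t, ⟨⟨ht1, htj⟩, hnt⟩, rfl⟩
      have := (hlt t (by omega)).2 htj
      exact ⟨⟨t, ⟨ht1, by omega⟩, rfl⟩, hnt, by omega⟩
  rw [hset, card_image_of_injOn (ha.injOn.mono fun t ht => ?_), tailCount]
  simp only [coe_filter, mem_Ico, Set.mem_ofPred_eq, Set.mem_Iic] at ht ⊢
  omega

lemma evenTailCount_one : evenTailCount a 1 = a 1 - 1 := by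
  simp [evenTailCount, tailCount]

lemma evenTailCount_two : evenTailCount a 2 = a 2 - a 1 - 1 := by
  have hset : {n ∈ Ico 1 (a 2) | Even (tailCount a 2 n)} = Ico (a 1 + 1) (a 2) := by
    ext n
    by_cases hn : n ≤ a 1 <;> simp [tailCount, filter_singleton, hn]; omega
  rw [evenTailCount, hset, Nat.card_Ico]
  omega

lemma evenTailCount_add_two (ha : StrictMonoOn a (Set.Iic (j + 2))) (hj : 1 ≤ j) :
    evenTailCount a (j + 2) = evenTailCount a j + (a (j + 2) - a (j + 1)) := by
  have hmem : ∀ {t}, t ≤ j + 2 → t ∈ Set.Iic (j + 2) := fun h => h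
  have h01 : a (j - 1) < a j := ha (hmem (by omega)) (hmem (by omega)) (by omega)
  have h12 : a j < a (j + 1) := ha (hmem (by omega)) (hmem (by omega)) (by omega)
  have h23 : a (j + 1) < a (j + 2) := ha (hmem (by omega)) (hmem (by omega)) (by omega)
  have hlow : ∀ n ≤ a j, tailCount a (j + 2) n = tailCount a j n + 2 := fun n hn => by
    rw [tailCount_add_one (by omega) (by omega), tailCount_add_one hj hn]
  have hmid : ∀ n, a j < n → n ≤ a (j + 1) → tailCount a (j + 2) n = 1 := fun n hlo hhi =>
    (tailCount_eq_sub (k := j + 1) ha (by omega) hlo hhi).trans (by omega)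
  have htop : ∀ n, a (j + 1) < n → n ≤ a (j + 2) → tailCount a (j + 2) n = 0 := fun n hlo hhi =>
    (tailCount_eq_sub (k := j + 2) ha le_rfl hlo hhi).trans (Nat.sub_self _)
  have hat : tailCount a j (a j) = 0 :=
    (tailCount_eq_sub (ha.mono (Set.Iic_subset_Iic.2 (by omega))) le_rfl h01 le_rfl).trans
      (Nat.sub_self _)
  rw [evenTailCount, evenTailCount, card_filter, card_filter,
    ← sum_Ico_consecutive _ (by omega : 1 ≤ a (j + 1) + 1) (by omega : a (j + 1) + 1 ≤ a (j + 2)),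
    ← sum_Ico_consecutive _ (by omega : 1 ≤ a j + 1) (by omega : a j + 1 ≤ a (j + 1) + 1),
    sum_Ico_succ_top (by omega : 1 ≤ a j)]
  have hsum_low : ∑ n ∈ Ico 1 (a j), (if Even (tailCount a (j + 2) n) then 1 else 0)
      = ∑ n ∈ Ico 1 (a j), (if Even (tailCount a j n) then 1 else 0) :=
    sum_congr rfl fun n hn => by
      simp only [hlow n (mem_Ico.1 hn).2.le, Nat.even_add, even_two, iff_true]
  have hsum_mid : ∑ n ∈ Ico (a j + 1) (a (j + 1) + 1),
      (if Even (tailCount a (j + 2) n) then 1 else 0) = 0 :=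
    sum_eq_zero fun n hn => by
      rw [mem_Ico] at hn
      simp [hmid n (by omega) (by omega)]
  have hsum_top : ∑ n ∈ Ico (a (j + 1) + 1) (a (j + 2)),
      (if Even (tailCount a (j + 2) n) then 1 else 0) = a (j + 2) - (a (j + 1) + 1) := by
    rw [sum_const_nat (m := 1) fun n hn => ?_, Nat.card_Ico, mul_one]
    rw [mem_Ico] at hn
    simp [htop n (by omega) (by omega)]
  rw [hsum_low, hsum_mid, hsum_top, hlow _ le_rfl, hat]
  norm_num
  omega

theorem evenTailCount_eq (h0 : a 0 = 0) (ha : StrictMonoOn a (Set.Iic j)) (hj : 1 ≤ j) :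
    (evenTailCount a j : ℤ) =
      ∑ k ∈ Icc 1 ((j + 1) / 2 - 1), ((a (j - 2 * k) : ℤ) - a (j - 2 * k - 1))
        + ((a j : ℤ) - a (j - 1) - 1) := by
  obtain ⟨j, rfl⟩ : ∃ j', j = j' + 1 := ⟨j - 1, by omega⟩
  clear hj
  have hlt : ∀ {s t}, s < t → t ≤ j + 1 → a s < a t := fun hst ht =>
    ha (Set.mem_Iic.2 (by omega)) (Set.mem_Iic.2 ht) hst
  induction j using Nat.twoStepInduction with
  | zero =>
    have := hlt zero_lt_one le_rfl
    rw [evenTailCount_one, Nat.cast_sub (by omega)]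
    simp [h0]
  | one =>
    have := hlt one_lt_two le_rfl
    rw [evenTailCount_two, Nat.sub_sub, Nat.cast_sub (by omega)]
    push_cast
    simp only [Order.lt_one_iff, Icc_eq_empty_of_lt, sum_empty, zero_add]
    ring
  | more n ih _ =>
    have hstep := hlt (by omega : n + 2 < n + 3) le_rfl
    rw [show n + 2 + 1 = n + 1 + 2 from rfl, evenTailCount_add_two ha (by omega),
      Nat.cast_add, Nat.cast_sub hstep.le,
      ih (ha.mono (Set.Iic_subset_Iic.2 (by omega))) (fun hst ht => hlt hst (by omega)),
      show (n + 1 + 2 + 1) / 2 - 1 = (n + 1 + 1) / 2 - 1 + 1 by omega,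
      sum_Icc_one_add_one']
    have hshift : ∀ k, n + 1 + 2 - 2 * (k + 1) = n + 1 - 2 * k := fun k => by omega
    simp only [hshift, Nat.mul_zero, Nat.sub_zero, show n + 1 + 2 - 1 = n + 2 by omega,
      show n + 1 - 1 = n by omega]
    ring

end EvenTailCount

theorem stmt15_general (m : ℕ)
    (i : ℕ → ℕ) (h0 : i 0 = 0)
    (hmono : ∀ k ≤ m, i k < i (k + 1))
    (j : ℕ) (hj : 1 ≤ j) (hjm : j ≤ m) :
    (((Finset.Icc 1 (i j - 1)).filter
        (fun n => Even ((((Finset.Icc 1 m).image i) ∩ Finset.Icc n (i j - 1)).card))).card : ℤ)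
      = (∑ k ∈ Finset.Icc 1 ((j + 1) / 2 - 1),
          ((i (j - 2 * k) : ℤ) - (i (j - 2 * k - 1) : ℤ)))
        + ((i j : ℤ) - (i (j - 1) : ℤ) - 1) := by
  have hi : StrictMonoOn i (Set.Iic m) :=
    strictMonoOn_of_lt_add_one Set.ordConnected_Iic fun k _ _ hk => hmono k (Nat.le_of_succ_le hk)
  have hIcc : Icc 1 (i j - 1) = Ico 1 (i j) := by
    ext n
    simp only [mem_Icc, mem_Ico]
    omega
  rw [hIcc,
    filter_congr fun n _ => by rw [EvenTailCount.card_image_inter_Icc_eq_tailCount hi hjm n]]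
  exact EvenTailCount.evenTailCount_eq h0 (hi.mono (Set.Iic_subset_Iic.2 hjm)) hj

/-- counting intervals `[n, i_j - 1]` with an even (possibly zero)
number of elements of `S`. -/
theorem stmt15 (ℓ m : ℕ) (hℓ : 1 ≤ ℓ) (hm : 1 ≤ m)
    (i : ℕ → ℕ) (h0 : i 0 = 0) (htop : i (m + 1) = ℓ + 1)
    (hmono : ∀ k ≤ m, i k < i (k + 1))
    (j : ℕ) (hj : 1 ≤ j) (hjm : j ≤ m) :
    (((Finset.Icc 1 (i j - 1)).filter
        (fun n => Even ((((Finset.Icc 1 m).image i) ∩ Finset.Icc n (i j - 1)).card))).card : ℤ)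
      = (∑ k ∈ Finset.Icc 1 ((j + 1) / 2 - 1),
          ((i (j - 2 * k) : ℤ) - (i (j - 2 * k - 1) : ℤ)))
        + ((i j : ℤ) - (i (j - 1) : ℤ) - 1) :=
  stmt15_general m i h0 hmono j hj hjm
end

section
/- Let ℓ ≥ 3 and let S = {i₁ < ⋯ < i_m} ⊆ {1,…,ℓ} with i_m ≤ ℓ−1 and m ≥ 1 (conventions i₀ = 0, i_{m+1} = ℓ+1). In the root system of type B_ℓ, with a positive root α = Σ n_i γ_i called compact iff Σ_{i∈S} n_i is even and relevant iff moreover Σ_{i∈S} n_i > 0, let δᶜ ∈ ℤ^ℓ be the coefficient vector of the sum of all relevant compact positive roots, and for 1 ≤ j ≤ m−1 set τ_{i_j} = −δᶜ_{i_j−1} + 2δᶜ_{i_j} − δᶜ_{i_j+1}. Then τ_{i_j} = −i_{j−1} + 2i_j − i_{j+1} + 2(S₁(j) − T₂(j)) + (−1)^{j+m}. -/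
open Finset

/- The pair `(a, b)` encodes the root `γ_a + ⋯ + γ_b` (first kind) or
`γ_a + ⋯ + γ_b + 2(γ_{b+1} + ⋯ + γ_ℓ)` (second kind); relevance is read off the `S`-height
`Σ_{i ∈ S} nᵢ` of the root. -/
abbrev IsRelevantCompact (h : ℕ) : Prop := Even h ∧ 0 < h

abbrev IsRelevantRootI (S : Finset ℕ) (a b : ℕ) : Prop :=
  a ≤ b ∧ IsRelevantCompact #(S ∩ Icc a b)

abbrev IsRelevantRootII (ℓ : ℕ) (S : Finset ℕ) (a b : ℕ) : Prop :=
  a ≤ b ∧ IsRelevantCompact (#(S ∩ Icc a b) + 2 * #(S ∩ Icc (b + 1) ℓ))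

abbrev IsTailRelevantRootII (ℓ : ℕ) (S : Finset ℕ) (a b : ℕ) : Prop :=
  a ≤ b ∧ #(S ∩ Icc a b) = 0 ∧ 0 < #(S ∩ Icc (b + 1) ℓ)

section

variable {ℓ : ℕ} {S : Finset ℕ} {a b x : ℕ}

theorem isRelevantRootII_iff :
    IsRelevantRootII ℓ S a b ↔ IsRelevantRootI S a b ∨ IsTailRelevantRootII ℓ S a b := by
  simp only [IsRelevantRootII, IsRelevantRootI, IsTailRelevantRootII, IsRelevantCompact,
    Nat.even_iff]
  omega

theorem IsRelevantRootI.not_isTailRelevantRootII (h : IsRelevantRootI S a b) :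
    ¬IsTailRelevantRootII ℓ S a b :=
  fun h' => h.2.2.ne' h'.2.1

theorem not_isTailRelevantRootII_of_mem (hx : x ∈ S) (hax : a ≤ x) (hxb : x ≤ b) :
    ¬IsTailRelevantRootII ℓ S a b := fun h =>
  (card_pos.2 ⟨x, mem_inter.2 ⟨hx, mem_Icc.2 ⟨hax, hxb⟩⟩⟩).ne' h.2.1

theorem filter_isTailRelevantRootII_left_eq_empty (hx : x ∈ S) (T : Finset ℕ) :
    {b ∈ T | IsTailRelevantRootII ℓ S x b} = ∅ :=
  filter_false_of_mem fun _ _ h => not_isTailRelevantRootII_of_mem hx le_rfl h.1 h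

theorem filter_isTailRelevantRootII_right_eq_empty (hx : x ∈ S) (T : Finset ℕ) :
    {a ∈ T | IsTailRelevantRootII ℓ S a x} = ∅ :=
  filter_false_of_mem fun _ _ h => not_isTailRelevantRootII_of_mem hx h.1 le_rfl h

theorem card_filter_isRelevantRootII_left (T : Finset ℕ) (a : ℕ) :
    #{b ∈ T | IsRelevantRootII ℓ S a b}
      = #{b ∈ T | IsRelevantRootI S a b} + #{b ∈ T | IsTailRelevantRootII ℓ S a b} := by
  rw [← card_union_of_disjoint (disjoint_filter.2 fun _ _ h => h.not_isTailRelevantRootII),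
    ← filter_or]
  exact congrArg card (filter_congr fun _ _ => isRelevantRootII_iff)

theorem card_filter_isRelevantRootII_right (T : Finset ℕ) (b : ℕ) :
    #{a ∈ T | IsRelevantRootII ℓ S a b}
      = #{a ∈ T | IsRelevantRootI S a b} + #{a ∈ T | IsTailRelevantRootII ℓ S a b} := by
  rw [← card_union_of_disjoint (disjoint_filter.2 fun _ _ h => h.not_isTailRelevantRootII),
    ← filter_or]
  exact congrArg card (filter_congr fun _ _ => isRelevantRootII_iff)

end

section

variable {α β R : Type*} [AddCommMonoidWithOne R] {P : α × β → Prop} [DecidablePred P]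
  {s : Finset α} {t : Finset β}

theorem sum_filter_product_ite_fst [DecidableEq α] {x : α} (hx : ∀ b ∈ t, P (x, b) → x ∈ s) :
    ∑ p ∈ (s ×ˢ t).filter P, (if p.1 = x then (1 : R) else 0) = #{b ∈ t | P (x, b)} := by
  rw [sum_boole]
  congr 1
  refine card_nbij' Prod.snd (fun b => (x, b)) ?_ ?_ ?_ ?_ <;> intro p <;> aesop

theorem sum_filter_product_ite_snd [DecidableEq β] {y : β} (hy : ∀ a ∈ s, P (a, y) → y ∈ t) :
    ∑ p ∈ (s ×ˢ t).filter P, (if p.2 = y then (1 : R) else 0) = #{a ∈ s | P (a, y)} := by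
  rw [sum_boole]
  congr 1
  refine card_nbij' Prod.fst (fun a => (a, y)) ?_ ?_ ?_ ?_ <;> intro p <;> aesop

end

theorem sum_neg_add_two_mul_sub {ι R : Type*} [CommRing R] (s : Finset ι) (f g h : ι → R) :
    -(∑ p ∈ s, f p) + 2 * ∑ p ∈ s, g p - ∑ p ∈ s, h p = ∑ p ∈ s, (-f p + 2 * g p - h p) := by
  rw [sum_sub_distrib, sum_add_distrib, mul_sum, sum_neg_distrib]

theorem card_filter_Icc_one_eq {p : ℕ → Prop} [DecidablePred p] {ℓ : ℕ} (hℓ : 1 ≤ ℓ) :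
    #{b ∈ Icc 1 ℓ | p b} = #{b ∈ Icc 1 (ℓ - 1) | p b} + if p ℓ then 1 else 0 := by
  rw [card_filter, card_filter]
  conv_lhs => rw [← Nat.sub_add_cancel hℓ]
  rw [sum_Icc_succ_top (by omega), Nat.sub_add_cancel hℓ]

theorem secondDiff_indicator_Icc {a b n : ℕ} (hab : a ≤ b) (hn : 1 ≤ n) :
    -(if a ≤ n - 1 ∧ n - 1 ≤ b then (1 : ℤ) else 0) + 2 * (if a ≤ n ∧ n ≤ b then 1 else 0)
        - (if a ≤ n + 1 ∧ n + 1 ≤ b then 1 else 0)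
      = (if a = n then 1 else 0) - (if a = n + 1 then 1 else 0)
        + (if b = n then 1 else 0) - (if b = n - 1 then 1 else 0) := by
  split_ifs <;> omega

theorem secondDiff_indicator_Icc_add_two_tail {ℓ a b n : ℕ} (hab : a ≤ b) (hn : 1 ≤ n)
    (hnℓ : n + 1 ≤ ℓ) :
    -((if a ≤ n - 1 ∧ n - 1 ≤ b then (1 : ℤ) else 0)
          + (if b + 1 ≤ n - 1 ∧ n - 1 ≤ ℓ then 2 else 0))
        + 2 * ((if a ≤ n ∧ n ≤ b then 1 else 0) + (if b + 1 ≤ n ∧ n ≤ ℓ then 2 else 0))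
        - ((if a ≤ n + 1 ∧ n + 1 ≤ b then 1 else 0)
          + (if b + 1 ≤ n + 1 ∧ n + 1 ≤ ℓ then 2 else 0))
      = (if a = n then 1 else 0) - (if a = n + 1 then 1 else 0)
        + (if b = n - 1 then 1 else 0) - (if b = n then 1 else 0) := by
  split_ifs <;> omega

theorem secondDiff_deltaB_s17 (ℓ : ℕ) (S : Finset ℕ) {n : ℕ} (hn : 1 ≤ n) (hnℓ : n + 1 ≤ ℓ) :
    -deltaB ℓ S (n - 1) + 2 * deltaB ℓ S n - deltaB ℓ S (n + 1)
      = (#{b ∈ Icc 1 ℓ | IsRelevantRootI S n b} : ℤ)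
        - #{b ∈ Icc 1 ℓ | IsRelevantRootI S (n + 1) b}
        + #{a ∈ Icc 1 ℓ | IsRelevantRootI S a n} - #{a ∈ Icc 1 ℓ | IsRelevantRootI S a (n - 1)}
        + #{b ∈ Icc 1 (ℓ - 1) | IsRelevantRootII ℓ S n b}
        - #{b ∈ Icc 1 (ℓ - 1) | IsRelevantRootII ℓ S (n + 1) b}
        + #{a ∈ Icc 1 ℓ | IsRelevantRootII ℓ S a (n - 1)}
        - #{a ∈ Icc 1 ℓ | IsRelevantRootII ℓ S a n} := by
  simp only [deltaB]
  rw [show ∀ x₁ x₂ y₁ y₂ z₁ z₂ : ℤ, -(x₁ + x₂) + 2 * (y₁ + y₂) - (z₁ + z₂)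
      = (-x₁ + 2 * y₁ - z₁) + (-x₂ + 2 * y₂ - z₂) from fun _ _ _ _ _ _ => by ring,
    sum_neg_add_two_mul_sub, sum_neg_add_two_mul_sub,
    sum_congr rfl fun p hp => secondDiff_indicator_Icc (mem_filter.1 hp).2.1 hn,
    sum_congr rfl fun p hp => secondDiff_indicator_Icc_add_two_tail (mem_filter.1 hp).2.1 hn hnℓ]
  simp only [sum_add_distrib, sum_sub_distrib]
  rw [sum_filter_product_ite_fst, sum_filter_product_ite_fst, sum_filter_product_ite_snd,
    sum_filter_product_ite_snd, sum_filter_product_ite_fst, sum_filter_product_ite_fst,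
    sum_filter_product_ite_snd, sum_filter_product_ite_snd]
  · ring
  all_goals
    intro x hx h
    have hab := h.1
    simp only [mem_Icc] at hx ⊢
    omega

theorem exists_le_lt_succ_of_le_of_lt_s17 {i : ℕ → ℕ} {b : ℕ} :
    ∀ {m : ℕ}, i 0 ≤ b → b < i (m + 1) → ∃ s ≤ m, i s ≤ b ∧ b < i (s + 1)
  | 0, h₀, h₁ => ⟨0, le_rfl, h₀, h₁⟩
  | m + 1, h₀, h₁ => by
    by_cases hb : b < i (m + 1)
    · obtain ⟨s, hs, hsb⟩ := exists_le_lt_succ_of_le_of_lt_s17 h₀ hb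
      exact ⟨s, by omega, hsb⟩
    · exact ⟨m + 1, le_rfl, not_lt.1 hb, h₁⟩

section

variable {ℓ m : ℕ} {i : ℕ → ℕ} (hi : StrictMonoOn i (Set.Iic (m + 1)))
include hi

theorem image_inter_Icc_eq {t s a b : ℕ} (ht : t ≤ m + 1) (hs : s ≤ m)
    (hta : i (t - 1) < a) (hat : a ≤ i t) (hsb : i s ≤ b) (hbs : b < i (s + 1)) :
    (Icc 1 m).image i ∩ Icc a b = (Icc t s).image i := by
  have hlt : ∀ {k l}, k ≤ m + 1 → l ≤ m + 1 → (i k < i l ↔ k < l) := hi.lt_iff_lt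
  have hle : ∀ {k l}, k ≤ m + 1 → l ≤ m + 1 → (i k ≤ i l ↔ k ≤ l) := hi.le_iff_le
  ext x
  simp only [mem_inter, mem_image, mem_Icc]
  constructor
  · rintro ⟨⟨k, hk, rfl⟩, hak, hkb⟩
    have h₁ := (hlt (l := k) (by omega) (by omega)).1 (hta.trans_le hak)
    have h₂ := (hlt (k := k) (by omega) (by omega)).1 (hkb.trans_lt hbs)
    exact ⟨k, ⟨by omega, by omega⟩, rfl⟩
  · rintro ⟨k, hk, rfl⟩
    have ht₀ : t ≠ 0 := by
      rintro rfl
      exact lt_irrefl _ (hta.trans_le hat)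
    exact ⟨⟨k, ⟨by omega, by omega⟩, rfl⟩, hat.trans ((hle (by omega) (by omega)).2 hk.1),
      ((hle (by omega) (by omega)).2 hk.2).trans hsb⟩

theorem card_image_inter_Icc_s17 {t s a b : ℕ} (ht : t ≤ m + 1) (hs : s ≤ m)
    (hta : i (t - 1) < a) (hat : a ≤ i t) (hsb : i s ≤ b) (hbs : b < i (s + 1)) :
    #((Icc 1 m).image i ∩ Icc a b) = s + 1 - t := by
  rw [image_inter_Icc_eq hi ht hs hta hat hsb hbs, card_image_of_injOn, Nat.card_Icc]
  exact hi.injOn.mono fun k hk => Set.mem_Iic.2 (by simp only [coe_Icc, Set.mem_Icc] at hk; omega)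

theorem filter_isRelevantRootI_eq_biUnion (htop : i (m + 1) = ℓ + 1) {t a : ℕ} (ht : t ≤ m + 1)
    (hta : i (t - 1) < a) (hat : a ≤ i t) :
    {b ∈ Icc 1 ℓ | IsRelevantRootI ((Icc 1 m).image i) a b}
      = (Icc 1 ((m - t + 1) / 2)).biUnion fun k => Ico (i (t + 2 * k - 1)) (i (t + 2 * k)) := by
  have hle : ∀ {k l}, k ≤ m + 1 → l ≤ m + 1 → k ≤ l → i k ≤ i l := fun hk hl hkl =>
    (hi.le_iff_le hk hl).2 hkl
  ext b
  simp only [mem_filter, mem_biUnion, mem_Icc, mem_Ico]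
  constructor
  · rintro ⟨⟨hb₁, hbℓ⟩, hab, ⟨r, hr⟩, hpos⟩
    obtain ⟨s, hs, hsb, hbs⟩ := exists_le_lt_succ_of_le_of_lt_s17 (m := m)
      ((hle (by omega) (by omega) (Nat.zero_le _)).trans (hta.trans_le hab).le) (by omega)
    rw [card_image_inter_Icc_s17 hi ht hs hta hat hsb hbs] at hr hpos
    refine ⟨r, ⟨by omega, by omega⟩, ?_, ?_⟩
    · rwa [show t + 2 * r - 1 = s by omega]
    · rwa [show t + 2 * r = s + 1 by omega]
  · rintro ⟨k, ⟨hk₁, hk⟩, hkb, hbk⟩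
    have hcard := card_image_inter_Icc_s17 hi ht (s := t + 2 * k - 1) (by omega) hta hat hkb
      (by rwa [show t + 2 * k - 1 + 1 = t + 2 * k by omega])
    have h₁ := hle (k := t - 1) (l := t) (by omega) (by omega) (by omega)
    have h₂ := hle (k := t) (l := t + 2 * k - 1) (by omega) (by omega) (by omega)
    have h₃ := hle (k := t + 2 * k) (l := m + 1) (by omega) le_rfl (by omega)
    exact ⟨⟨by omega, by omega⟩, by omega, ⟨k, by omega⟩, by omega⟩

theorem card_filter_isRelevantRootI (htop : i (m + 1) = ℓ + 1) {t a : ℕ} (ht : t ≤ m + 1)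
    (hta : i (t - 1) < a) (hat : a ≤ i t) :
    (#{b ∈ Icc 1 ℓ | IsRelevantRootI ((Icc 1 m).image i) a b} : ℤ)
      = ∑ k ∈ Icc 1 ((m - t + 1) / 2), ((i (t + 2 * k) : ℤ) - i (t + 2 * k - 1)) := by
  have hle : ∀ {k l}, k ≤ m + 1 → l ≤ m + 1 → k ≤ l → i k ≤ i l := fun hk hl hkl =>
    (hi.le_iff_le hk hl).2 hkl
  rw [filter_isRelevantRootI_eq_biUnion hi htop ht hta hat, card_biUnion, Nat.cast_sum]
  · refine sum_congr rfl fun k hk => ?_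
    rw [mem_Icc] at hk
    rw [Nat.card_Ico, Nat.cast_sub (hle (by omega) (by omega) (by omega))]
  · intro k hk k' hk' hne
    simp only [coe_Icc, Set.mem_Icc] at hk hk'
    refine disjoint_left.2 fun x hx hx' => ?_
    rw [mem_Ico] at hx hx'
    rcases Nat.lt_or_gt_of_ne hne with h | h
    · have := hle (k := t + 2 * k) (l := t + 2 * k' - 1) (by omega) (by omega) (by omega)
      omega
    · have := hle (k := t + 2 * k') (l := t + 2 * k - 1) (by omega) (by omega) (by omega)
      omega

variable (htop : i (m + 1) = ℓ + 1)
include htop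

theorem isRelevantRootI_top_iff {t a : ℕ} (ht : t ≤ m) (hta : i (t - 1) < a) (hat : a ≤ i t) :
    IsRelevantRootI ((Icc 1 m).image i) a ℓ ↔ Even (m - t + 1) := by
  have him : i m < i (m + 1) := (hi.lt_iff_lt (by simp) (by simp)).2 (by omega)
  have hit : i t ≤ i m := (hi.le_iff_le (by simp; omega) (by simp)).2 ht
  rw [IsRelevantRootI, card_image_inter_Icc_s17 hi (by omega) le_rfl hta hat (by omega) (by omega),
    show m + 1 - t = m - t + 1 by omega]
  exact ⟨fun h => h.2.1, fun h => ⟨by omega, h, by omega⟩⟩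

theorem filter_isTailRelevantRootII_left {t : ℕ} (ht : t + 1 ≤ m) :
    {b ∈ Icc 1 (ℓ - 1) | IsTailRelevantRootII ℓ ((Icc 1 m).image i) (i t + 1) b}
      = Ico (i t + 1) (i (t + 1)) := by
  have hmem : i (t + 1) ∈ (Icc 1 m).image i := mem_image_of_mem i (mem_Icc.2 ⟨by omega, ht⟩)
  have hle : i (t + 1) < i (m + 1) := (hi.lt_iff_lt (by simp; omega) (by simp)).2 (by omega)
  have hlt : i t < i (t + 1) := (hi.lt_iff_lt (by simp; omega) (by simp; omega)).2 (by omega)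
  ext b
  simp only [mem_filter, mem_Icc, mem_Ico]
  constructor
  · rintro ⟨-, hab, hzero, hpos⟩
    exact ⟨hab, lt_of_not_ge fun h =>
      not_isTailRelevantRootII_of_mem hmem hlt h ⟨hab, hzero, hpos⟩⟩
  · rintro ⟨hab, hbt⟩
    refine ⟨⟨by omega, by omega⟩, hab, ?_,
      card_pos.2 ⟨i (t + 1), mem_inter.2 ⟨hmem, mem_Icc.2 ⟨hbt, by omega⟩⟩⟩⟩
    rw [card_image_inter_Icc_s17 hi (t := t + 1) (s := t) (by omega) (by omega) (by simp) hlt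
      (by omega) hbt]
    omega

theorem filter_isTailRelevantRootII_right (h0 : i 0 = 0) {t : ℕ} (ht₁ : 1 ≤ t) (ht : t ≤ m) :
    {a ∈ Icc 1 ℓ | IsTailRelevantRootII ℓ ((Icc 1 m).image i) a (i t - 1)}
      = Ioc (i (t - 1)) (i t - 1) := by
  have hmem : i t ∈ (Icc 1 m).image i := mem_image_of_mem i (mem_Icc.2 ⟨ht₁, ht⟩)
  have hle : i t < i (m + 1) := (hi.lt_iff_lt (by simp; omega) (by simp)).2 (by omega)
  have hlt : i (t - 1) < i t := (hi.lt_iff_lt (by simp; omega) (by simp; omega)).2 (by omega)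
  ext a
  simp only [mem_filter, mem_Icc, mem_Ioc]
  constructor
  · rintro ⟨⟨ha₁, -⟩, hab, hzero, hpos⟩
    refine ⟨lt_of_not_ge fun h => ?_, hab⟩
    rcases Nat.eq_or_lt_of_le ht₁ with rfl | ht₁
    · simp only [Nat.sub_self, h0] at h
      omega
    · have hmem' : i (t - 1) ∈ (Icc 1 m).image i :=
        mem_image_of_mem i (mem_Icc.2 ⟨by omega, by omega⟩)
      exact not_isTailRelevantRootII_of_mem hmem' h (by omega) ⟨hab, hzero, hpos⟩
  · rintro ⟨hta, hat⟩
    refine ⟨⟨by omega, by omega⟩, hat, ?_,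
      card_pos.2 ⟨i t, mem_inter.2 ⟨hmem, mem_Icc.2 ⟨by omega, by omega⟩⟩⟩⟩
    rw [card_image_inter_Icc_s17 hi (t := t) (s := t - 1) (by omega) (by omega) hta (by omega)
      (by omega) (by rw [Nat.sub_add_cancel ht₁]; omega)]
    omega

end

theorem stmt17_general (ℓ m : ℕ)
    (i : ℕ → ℕ) (h0 : i 0 = 0) (htop : i (m + 1) = ℓ + 1)
    (hmono : ∀ k ≤ m, i k < i (k + 1))
    (j : ℕ) (hj : 1 ≤ j) (hjm : j + 1 ≤ m) :
    -(deltaB ℓ ((Finset.Icc 1 m).image i) (i j - 1))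
      + 2 * deltaB ℓ ((Finset.Icc 1 m).image i) (i j)
      - deltaB ℓ ((Finset.Icc 1 m).image i) (i j + 1)
      = -(i (j - 1) : ℤ) + 2 * (i j : ℤ) - (i (j + 1) : ℤ)
        + 2 * ((∑ k ∈ Finset.Icc 1 ((m - j + 1) / 2),
            ((i (j + 2 * k) : ℤ) - (i (j + 2 * k - 1) : ℤ)))
          - (∑ k ∈ Finset.Icc 1 ((m - j) / 2),
            ((i (j + 2 * k + 1) : ℤ) - (i (j + 2 * k) : ℤ))))
        + (-1 : ℤ) ^ (j + m) := by
  have hi : StrictMonoOn i (Set.Iic (m + 1)) :=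
    strictMonoOn_Iic_of_lt_succ fun k hk => hmono k (by omega)
  have hj₀ : i (j - 1) < i j := (hi.lt_iff_lt (by simp; omega) (by simp; omega)).2 (by omega)
  have hj₁ : i j < i (j + 1) := (hi.lt_iff_lt (by simp; omega) (by simp; omega)).2 (by omega)
  have hjℓ : i (j + 1) < i (m + 1) := (hi.lt_iff_lt (by simp; omega) (by simp)).2 (by omega)
  have hmem : i j ∈ (Icc 1 m).image i := mem_image_of_mem i (mem_Icc.2 ⟨hj, by omega⟩)
  have hS₁ := card_filter_isRelevantRootI hi htop (t := j) (by omega) hj₀ le_rfl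
  have hT₂ := card_filter_isRelevantRootI hi htop (t := j + 1) (a := i j + 1) (by omega)
    (by simp) hj₁
  have htop₀ := card_filter_Icc_one_eq (p := IsRelevantRootI ((Icc 1 m).image i) (i j))
    (by omega : 1 ≤ ℓ)
  have htop₁ := card_filter_Icc_one_eq (p := IsRelevantRootI ((Icc 1 m).image i) (i j + 1))
    (by omega : 1 ≤ ℓ)
  simp only [isRelevantRootI_top_iff hi htop (by omega) hj₀ le_rfl] at htop₀
  simp only [isRelevantRootI_top_iff hi htop (t := j + 1) (by omega) (by simp) hj₁] at htop₁
  rw [show m - (j + 1) + 1 = m - j by omega] at hT₂ htop₁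
  simp only [show ∀ k, j + 1 + 2 * k = j + 2 * k + 1 from fun k => by ring,
    Nat.add_sub_cancel] at hT₂
  rw [secondDiff_deltaB_s17 ℓ _ (by omega) (by omega), card_filter_isRelevantRootII_left,
    card_filter_isRelevantRootII_left, card_filter_isRelevantRootII_right,
    card_filter_isRelevantRootII_right, filter_isTailRelevantRootII_left hi htop hjm,
    filter_isTailRelevantRootII_right hi htop h0 hj (by omega),
    filter_isTailRelevantRootII_left_eq_empty hmem, filter_isTailRelevantRootII_right_eq_empty hmem,
    card_empty, Nat.card_Ico, Nat.card_Ioc, neg_one_pow_eq_ite]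
  simp only [Nat.even_iff] at htop₀ htop₁ ⊢
  push_cast
  split_ifs at htop₀ htop₁ ⊢ <;> omega

/-- type `B_ℓ`, case `j ≠ m`:
`τ_{i_j} = −i_{j−1} + 2i_j − i_{j+1} + 2(S₁(j) − T₂(j)) + (−1)^{j+m}`. -/
theorem stmt17 (ℓ m : ℕ) (hℓ : 3 ≤ ℓ) (hm : 1 ≤ m)
    (i : ℕ → ℕ) (h0 : i 0 = 0) (htop : i (m + 1) = ℓ + 1)
    (hmono : ∀ k ≤ m, i k < i (k + 1)) (him : i m ≤ ℓ - 1)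
    (j : ℕ) (hj : 1 ≤ j) (hjm : j + 1 ≤ m) :
    -(deltaB ℓ ((Finset.Icc 1 m).image i) (i j - 1))
      + 2 * deltaB ℓ ((Finset.Icc 1 m).image i) (i j)
      - deltaB ℓ ((Finset.Icc 1 m).image i) (i j + 1)
      = -(i (j - 1) : ℤ) + 2 * (i j : ℤ) - (i (j + 1) : ℤ)
        + 2 * ((∑ k ∈ Finset.Icc 1 ((m - j + 1) / 2),
            ((i (j + 2 * k) : ℤ) - (i (j + 2 * k - 1) : ℤ)))
          - (∑ k ∈ Finset.Icc 1 ((m - j) / 2),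
            ((i (j + 2 * k + 1) : ℤ) - (i (j + 2 * k) : ℤ))))
        + (-1 : ℤ) ^ (j + m) :=
  stmt17_general ℓ m i h0 htop hmono j hj hjm
end
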